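/- arXiv:1503.05739 — 5 statements merged into one kernel-verified Lean document; each statement's English description precedes it below -/
import Mathlib

section
/- Let P ⊂ ℝ^d be a d-dimensional CL-polytope, i.e. a d-dimensional lattice polytope all of whose Ehrhart polynomial roots z ∈ ℂ satisfy Re z = −1/2. Then vol(P) ≤ 2^d. -/
open Pointwise MeasureTheory Polynomial

noncomputable section

/-- The lattice points of a subset `S ⊆ ℝ^d`: integer vectors whose real cast lies in `S`. -/
def latticePts (d : ℕ) (S : Set (Fin d → ℝ)) : Set (Fin d → ℤ) :=
  {x | (fun i => (x i : ℝ)) ∈ S}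

/-- `P ⊆ ℝ^d` is a lattice polytope: the convex hull of finitely many integer points. -/
def IsLatticePolytope (d : ℕ) (P : Set (Fin d → ℝ)) : Prop :=
  ∃ V : Finset (Fin d → ℤ),
    P = convexHull ℝ ((fun v : Fin d → ℤ => fun i => (v i : ℝ)) '' (V : Set (Fin d → ℤ)))

/-- `P` is full-dimensional in `ℝ^d`. -/
def IsFullDim (d : ℕ) (P : Set (Fin d → ℝ)) : Prop :=
  affineSpan ℝ P = ⊤

/-- `L` is the Ehrhart polynomial of `P`: `L(m) = |mP ∩ ℤ^d|` for every natural number `m`. -/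
def IsEhrhart (d : ℕ) (P : Set (Fin d → ℝ)) (L : Polynomial ℚ) : Prop :=
  ∀ m : ℕ, L.eval (m : ℚ) = ((latticePts d ((m : ℝ) • P)).ncard : ℚ)

/-- The complex roots of a rational polynomial, counted with multiplicity. -/
def cRoots (L : Polynomial ℚ) : Multiset ℂ :=
  (L.map (algebraMap ℚ ℂ)).roots

/-- `L` is a CL-polynomial: every complex root has real part `-1/2`. -/
def IsCL (L : Polynomial ℚ) : Prop :=
  ∀ z ∈ cRoots L, z.re = -(1/2 : ℝ)

/-- `L` has only real roots: every complex root has imaginary part `0`. -/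
def IsRealRooted (L : Polynomial ℚ) : Prop :=
  ∀ z ∈ cRoots L, z.im = 0

/-- The dual (polar) body `{u : ⟨u,v⟩ ≥ -1 for all v ∈ P}`. -/
def dualBody (d : ℕ) (P : Set (Fin d → ℝ)) : Set (Fin d → ℝ) :=
  {u | ∀ v ∈ P, -1 ≤ ∑ i, u i * v i}

/-- `P` is reflexive: the origin is interior and the dual body is a lattice polytope. -/
def IsReflexive (d : ℕ) (P : Set (Fin d → ℝ)) : Prop :=
  (0 : Fin d → ℝ) ∈ interior P ∧ IsLatticePolytope d (dualBody d P)

/-- The Euclidean volume of `P ⊆ ℝ^d`. -/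
def vol (d : ℕ) (P : Set (Fin d → ℝ)) : ℝ :=
  (volume P).toReal

/-- `δ` is the δ-vector of the Ehrhart polynomial `L` in dimension `d`:
`L(m) = ∑_{j=0}^d δ_j C(d+m-j, d)` for all natural numbers `m`. -/
def HasDeltaVector (d : ℕ) (L : Polynomial ℚ) (δ : Fin (d+1) → ℤ) : Prop :=
  ∀ m : ℕ, L.eval (m : ℚ) = ∑ j : Fin (d+1), (δ j : ℚ) * (Nat.choose (d + m - (j : ℕ)) d : ℚ)

/-- The discriminant `B²C² − 4AC³ − 4B³D − 27A²D² + 18ABCD` of the cubic `Az³+Bz²+Cz+D`. -/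
def cubicDisc (A B C D : ℚ) : ℚ :=
  B^2*C^2 - 4*A*C^3 - 4*B^3*D - 27*A^2*D^2 + 18*A*B*C*D


open scoped ENNReal NNReal

lemma multiset_prod_map_le (s : Multiset ℂ) (f g : ℂ → ℝ)
    (h : ∀ z ∈ s, 0 ≤ f z ∧ f z ≤ g z) :
    (s.map f).prod ≤ (s.map g).prod := by
  induction s using Multiset.induction with
  | empty => simp
  | cons a s ih =>
    simp only [Multiset.map_cons, Multiset.prod_cons]
    have ha := h a (Multiset.mem_cons_self a s)
    have hs : ∀ z ∈ s, 0 ≤ f z ∧ f z ≤ g z := fun z hz => h z (Multiset.mem_cons_of_mem hz)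
    have h1 : 0 ≤ (Multiset.map f s).prod := by
      apply Multiset.prod_nonneg
      intro x hx
      obtain ⟨z, hz, rfl⟩ := Multiset.mem_map.mp hx
      exact (hs z hz).1
    exact mul_le_mul ha.2 (ih hs) h1 (ha.1.trans ha.2)

lemma eval_abs_eq (L : Polynomial ℚ) (t : ℂ) :
    ‖(L.map (algebraMap ℚ ℂ)).eval t‖ =
      ‖(L.map (algebraMap ℚ ℂ)).leadingCoeff‖ *
        ((cRoots L).map (fun z => ‖t - z‖)).prod := by
  set Lc := L.map (algebraMap ℚ ℂ) with hLc
  have heq := (IsAlgClosed.splits Lc).eq_prod_roots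
  conv_lhs => rw [heq]
  rw [Polynomial.eval_mul, Polynomial.eval_C, Polynomial.eval_multiset_prod, norm_mul,
    show ∀ s : Multiset ℂ, ‖s.prod‖ = (s.map (‖·‖)).prod from fun s => map_multiset_prod normHom s, Multiset.map_map, Multiset.map_map]
  congr 2
  ext z
  simp [cRoots, hLc]

lemma eval_nat_cast' (L : Polynomial ℚ) (m : ℕ) :
    (L.map (algebraMap ℚ ℂ)).eval ((m : ℝ) : ℂ) = ((L.eval (m : ℚ) : ℚ) : ℂ) := by
  rw [Polynomial.eval_map]
  have : ((m : ℝ) : ℂ) = algebraMap ℚ ℂ (m : ℚ) := by push_cast; rfl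
  rw [this, Polynomial.eval₂_at_apply]
  rfl

lemma cl_eval_bounds (L : Polynomial ℚ) (hL0 : L.eval 0 = 1) (hCL : IsCL L) :
    ∃ A : ℝ, 0 < A ∧ ∀ t : ℝ, 0 ≤ t →
      A * (t + 1/2) ^ Multiset.card (cRoots L) ≤
        ‖(L.map (algebraMap ℚ ℂ)).eval (t : ℂ)‖ ∧
      ‖(L.map (algebraMap ℚ ℂ)).eval (t : ℂ)‖ ≤
        (2*t+1) ^ Multiset.card (cRoots L) := by
  have hL : L ≠ 0 := fun h => by simp [h] at hL0
  set Lc := L.map (algebraMap ℚ ℂ) with hLc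
  have hLcne : Lc ≠ 0 := (Polynomial.map_ne_zero_iff (algebraMap ℚ ℂ).injective).mpr hL
  set A : ℝ := ‖Lc.leadingCoeff‖ with hA
  have hApos : 0 < A := norm_pos_iff.mpr (Polynomial.leadingCoeff_ne_zero.mpr hLcne)
  set e := Multiset.card (cRoots L) with he
  set Q : ℝ := ((cRoots L).map (fun z => ‖z‖)).prod with hQ
  have hAQ : A * Q = 1 := by
    have h0 := eval_abs_eq L 0
    have hv : Lc.eval 0 = 1 := by
      have h00 : (0 : ℂ) = ((0 : ℝ) : ℂ) := by norm_num
      have h01 : ((0:ℕ):ℝ) = (0:ℝ) := by norm_num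
      rw [h00, ← h01, eval_nat_cast' L 0]
      norm_num [hL0]
    rw [hv] at h0
    simp only [norm_one] at h0
    have : (Multiset.map (fun z => ‖0 - z‖) (cRoots L)) =
        (Multiset.map (fun z => ‖z‖) (cRoots L)) := by
      apply Multiset.map_congr rfl
      intro z _
      rw [zero_sub, norm_neg]
    rw [this] at h0
    exact h0.symm
  refine ⟨A, hApos, fun t ht => ?_⟩
  have habs := eval_abs_eq L (t : ℂ)
  have hpt : ∀ z ∈ cRoots L,
      t + 1/2 ≤ ‖(t:ℂ) - z‖ ∧
      ‖(t:ℂ) - z‖ ≤ (2*t+1) * ‖z‖ := by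
    intro z hz
    have hre := hCL z hz
    have hsq : (‖(t:ℂ) - z‖)^2 = (t + 1/2)^2 + z.im^2 := by
      rw [Complex.sq_norm, Complex.normSq_apply]
      simp [Complex.sub_re, Complex.sub_im, hre]
      ring
    have hzsq : (‖z‖)^2 = 1/4 + z.im^2 := by
      rw [Complex.sq_norm, Complex.normSq_apply, hre]
      ring
    constructor
    · apply le_of_pow_le_pow_left₀ (n := 2) two_ne_zero (norm_nonneg _)
      rw [hsq]
      nlinarith [sq_nonneg z.im]
    · apply le_of_pow_le_pow_left₀ (n := 2) two_ne_zero (by positivity)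
      rw [mul_pow, hsq, hzsq]
      nlinarith [sq_nonneg z.im, sq_nonneg t]
  constructor
  · rw [habs]
    have hmle := multiset_prod_map_le (cRoots L) (fun _ => t + 1/2)
      (fun z => ‖(t:ℂ) - z‖) (fun z hz => ⟨by linarith, (hpt z hz).1⟩)
    have hconst : ((cRoots L).map (fun _ => t + 1/2)).prod = (t + 1/2)^e := by
      rw [Multiset.map_const', Multiset.prod_replicate]
    rw [hconst] at hmle
    exact mul_le_mul_of_nonneg_left hmle hApos.le
  · rw [habs]
    have hle := multiset_prod_map_le (cRoots L) (fun z => ‖(t:ℂ) - z‖)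
      (fun z => (2*t+1) * ‖z‖)
      (fun z hz => ⟨norm_nonneg _, (hpt z hz).2⟩)
    have hsplit : ((cRoots L).map (fun z => (2*t+1) * ‖z‖)).prod
        = (2*t+1)^e * Q := by
      have hmm := Multiset.prod_map_mul (m := cRoots L) (f := fun _ => (2*t+1))
        (g := fun z => ‖z‖)
      rw [hmm, Multiset.map_const', Multiset.prod_replicate]
    calc A * ((cRoots L).map (fun z => ‖(t:ℂ) - z‖)).prod
        ≤ A * ((2*t+1)^e * Q) := mul_le_mul_of_nonneg_left (hsplit ▸ hle) hApos.le
      _ = (2*t+1)^e * (A * Q) := by ring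
      _ = (2*t+1)^e := by rw [hAQ, mul_one]

lemma lattice_box (d : ℕ) (S : Set (Fin d → ℝ)) (C : ℕ)
    (h : ∀ y ∈ S, ∀ i, |y i| ≤ (C : ℝ)) :
    (latticePts d S).Finite ∧ (latticePts d S).ncard ≤ (2*C+1)^d := by
  classical
  set F : Finset (Fin d → ℤ) := Fintype.piFinset (fun _ => Finset.Icc (-(C:ℤ)) (C:ℤ)) with hF
  have hsub : latticePts d S ⊆ (F : Set (Fin d → ℤ)) := by
    intro x hx
    simp only [hF, Finset.mem_coe, Fintype.mem_piFinset, Finset.mem_Icc]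
    intro i
    have h2 := h _ hx i
    rw [abs_le] at h2
    exact ⟨by exact_mod_cast h2.1, by exact_mod_cast h2.2⟩
  have hfin := F.finite_toSet.subset hsub
  refine ⟨hfin, ?_⟩
  have hle := Set.ncard_le_ncard hsub F.finite_toSet
  rw [Set.ncard_coe_finset] at hle
  refine hle.trans ?_
  rw [hF, Fintype.card_piFinset]
  have hc : ∀ i : Fin d, (Finset.Icc (-(C:ℤ)) (C:ℤ)).card = 2*C+1 := by
    intro i
    rw [Int.card_Icc]
    omega
  rw [Finset.prod_congr rfl (fun i _ => hc i), Finset.prod_const, Finset.card_univ,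
    Fintype.card_fin]

lemma cube_volume (d : ℕ) (a : Fin d → ℝ) :
    volume (Set.pi Set.univ (fun i => Set.Ico (a i) (a i + 1))) = 1 := by
  rw [volume_pi_pi]
  simp [Real.volume_Ico]

lemma covering (d : ℕ) (P : Set (Fin d → ℝ)) (hPcvx : Convex ℝ P) (k m : ℕ) (x : Fin d → ℤ)
    (hcube_sub : ∀ w : Fin d → ℝ, (∀ i, (x i : ℝ) - 1 ≤ w i ∧ w i ≤ x i) → w ∈ (k:ℝ) • P)
    (hfin : (latticePts d (((m+k : ℕ):ℝ) • P)).Finite) :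
    volume ((m:ℝ) • P) ≤ ((latticePts d (((m+k : ℕ):ℝ) • P)).ncard : ℝ≥0∞) := by
  classical
  set S := latticePts d (((m+k:ℕ):ℝ) • P) with hS
  set F := hfin.toFinset with hFdef
  set cube : (Fin d → ℤ) → Set (Fin d → ℝ) :=
    fun w => Set.pi Set.univ (fun i => Set.Ico ((w i : ℝ) - x i) ((w i : ℝ) - x i + 1)) with hcube
  have hcover : (m:ℝ) • P ⊆ ⋃ w ∈ F, cube w := by
    intro y hy
    set z : Fin d → ℤ := fun i => ⌊y i⌋ with hz
    have hwS : (z + x) ∈ S := by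
      have hu : (fun i => (((z + x) i : ℤ) : ℝ)) = y + fun i => ((z i : ℝ) + x i - y i) := by
        funext i
        simp only [Pi.add_apply, Int.cast_add]
        ring
      have huk : (fun i => ((z i : ℝ) + x i - y i)) ∈ (k:ℝ) • P := by
        apply hcube_sub
        intro i
        have hf1 : (z i : ℝ) ≤ y i := Int.floor_le (y i)
        have hf2 : y i < (z i : ℝ) + 1 := Int.lt_floor_add_one (y i)
        constructor <;> [linarith; linarith]
      have hadd : ((m:ℝ) + (k:ℝ)) • P = (m:ℝ) • P + (k:ℝ) • P :=
        hPcvx.add_smul (by positivity) (by positivity)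
      show (fun i => (((z + x) i : ℤ) : ℝ)) ∈ ((m+k:ℕ):ℝ) • P
      rw [hu]
      have hmk : ((m+k:ℕ):ℝ) = (m:ℝ) + (k:ℝ) := by push_cast; ring
      rw [hmk, hadd]
      exact Set.add_mem_add hy huk
    refine Set.mem_biUnion (hfin.mem_toFinset.mpr hwS) ?_
    intro i _
    simp only [Pi.add_apply, Int.cast_add, Set.mem_Ico]
    have hf1 : (z i : ℝ) ≤ y i := Int.floor_le (y i)
    have hf2 : y i < (z i : ℝ) + 1 := Int.lt_floor_add_one (y i)
    constructor <;> [linarith; linarith]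
  calc volume ((m:ℝ) • P) ≤ volume (⋃ w ∈ F, cube w) := measure_mono hcover
    _ ≤ ∑ w ∈ F, volume (cube w) := measure_biUnion_finset_le F cube
    _ = ∑ w ∈ F, 1 := by
        apply Finset.sum_congr rfl
        intro w _
        exact cube_volume d _
    _ = (F.card : ℝ≥0∞) := by simp
    _ = (S.ncard : ℝ≥0∞) := by rw [Set.ncard_eq_toFinset_card S hfin]

theorem statement2 (d : ℕ) (hd : 1 ≤ d) (P : Set (Fin d → ℝ)) (L : Polynomial ℚ)
    (hP : IsLatticePolytope d P) (hdim : IsFullDim d P) (hL : IsEhrhart d P L)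
    (hCL : IsCL L) :
    vol d P ≤ 2 ^ d := by
  classical
  obtain ⟨V, hV⟩ := hP
  have hPcvx : Convex ℝ P := hV ▸ convex_convexHull ℝ _
  have hPcpt : IsCompact P := by
    rw [hV]
    exact ((V : Set (Fin d → ℤ)).toFinite.image _).isCompact_convexHull (𝕜 := ℝ)
  have hint : (interior P).Nonempty := hPcvx.interior_nonempty_iff_affineSpan_eq_top.mpr hdim
  obtain ⟨c, hc⟩ := hint
  obtain ⟨ε, hε, hball⟩ := Metric.isOpen_iff.mp isOpen_interior c hc
  have hballP : Metric.ball c ε ⊆ P := hball.trans interior_subset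
  obtain ⟨R, hR⟩ := hPcpt.isBounded.subset_closedBall 0
  set B : ℕ := ⌈R⌉₊ + 1 with hB
  have hcount : ∀ m : ℕ, (latticePts d ((m:ℝ) • P)).Finite ∧
      (latticePts d ((m:ℝ) • P)).ncard ≤ (2*(B*m)+1)^d := by
    intro m
    apply lattice_box
    intro y hy i
    obtain ⟨p, hp, rfl⟩ := hy
    have h1 : |p i| ≤ ‖p‖ := by
      have := norm_le_pi_norm p i
      rwa [Real.norm_eq_abs] at this
    have h2 : ‖p‖ ≤ R := by
      have := hR hp
      rwa [Metric.mem_closedBall, dist_zero_right] at this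
    have h3 : R ≤ (B:ℝ) := by
      rw [hB]
      push_cast
      linarith [Nat.le_ceil R]
    have habs : |p i| ≤ (B:ℝ) := h1.trans (h2.trans h3)
    show |((m:ℝ) • p) i| ≤ ((B*m : ℕ):ℝ)
    simp only [Pi.smul_apply, smul_eq_mul, abs_mul, Nat.abs_cast]
    push_cast
    have hm0 : (0:ℝ) ≤ (m:ℝ) := Nat.cast_nonneg m
    have hmul := mul_le_mul_of_nonneg_left habs hm0
    rw [hB] at hmul
    push_cast at hmul
    linarith [mul_le_mul_of_nonneg_left habs hm0]
  have hPne : P.Nonempty := ⟨c, hballP (Metric.mem_ball_self hε)⟩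
  have hL0 : L.eval 0 = 1 := by
    have h := hL 0
    rw [Nat.cast_zero] at h
    have h0 : ((0:ℕ):ℝ) • P = {0} := by
      rw [Nat.cast_zero]
      exact Set.zero_smul_set hPne
    rw [h0] at h
    have h1 : latticePts d {(0 : Fin d → ℝ)} = {(0 : Fin d → ℤ)} := by
      ext x
      simp [latticePts, funext_iff]
    rw [h1, Set.ncard_singleton] at h
    simpa using h
  have hEnn : ∀ m : ℕ, 0 ≤ L.eval (m:ℚ) := by
    intro m
    rw [hL m]
    positivity
  have hevR : ∀ m : ℕ, ‖(L.map (algebraMap ℚ ℂ)).eval ((m:ℝ):ℂ)‖ =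
      ((L.eval (m:ℚ) : ℚ) : ℝ) := by
    intro m
    rw [eval_nat_cast']
    have hc2 : ((L.eval (m:ℚ) : ℚ) : ℂ) = (((L.eval (m:ℚ) : ℚ) : ℝ) : ℂ) := by push_cast; rfl
    rw [hc2, Complex.norm_real, Real.norm_eq_abs, abs_of_nonneg (by exact_mod_cast hEnn m)]
  obtain ⟨A, hApos, hbounds⟩ := cl_eval_bounds L hL0 hCL
  set e := Multiset.card (cRoots L) with he
  have hLeval : ∀ m : ℕ, ((L.eval (m:ℚ) : ℚ):ℝ) = ((latticePts d ((m:ℝ)•P)).ncard : ℝ) := by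
    intro m
    rw [hL m]
    push_cast
    rfl
  -- degree bound : e ≤ d
  have hed : e ≤ d := by
    by_contra hlt
    push_neg at hlt
    obtain ⟨M, hM⟩ := exists_nat_gt ((2*(B:ℝ)+1)^d / A)
    set m : ℕ := M + 1 with hm
    have hm1 : (1:ℝ) ≤ (m:ℝ) := by
      rw [hm]
      push_cast
      linarith [Nat.cast_nonneg (α := ℝ) M]
    have hb1 := (hbounds m (by positivity)).1
    rw [hevR m] at hb1
    have hb2 : ((L.eval (m:ℚ):ℚ):ℝ) ≤ ((2*(B*m)+1)^d : ℕ) := by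
      rw [hLeval m]
      exact_mod_cast (hcount m).2
    have c1 : A * (m:ℝ)^(d+1) ≤ A * ((m:ℝ)+1/2)^e := by
      apply mul_le_mul_of_nonneg_left _ hApos.le
      calc (m:ℝ)^(d+1) ≤ (m:ℝ)^e := pow_le_pow_right₀ hm1 hlt
        _ ≤ ((m:ℝ)+1/2)^e := pow_le_pow_left₀ (by linarith) (by linarith) e
    have c2 : (((2*(B*m)+1)^d : ℕ) : ℝ) ≤ ((2*(B:ℝ)+1) * m)^d := by
      push_cast
      apply pow_le_pow_left₀ (by positivity) _ d
      have hB0 : (0:ℝ) ≤ (B:ℝ) := Nat.cast_nonneg B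
      nlinarith
    have c3 : A * (m:ℝ) * (m:ℝ)^d ≤ (2*(B:ℝ)+1)^d * (m:ℝ)^d := by
      have : ((2*(B:ℝ)+1) * m)^d = (2*(B:ℝ)+1)^d * (m:ℝ)^d := mul_pow _ _ d
      calc A * (m:ℝ) * (m:ℝ)^d = A * (m:ℝ)^(d+1) := by ring
        _ ≤ A * ((m:ℝ)+1/2)^e := c1
        _ ≤ ((L.eval (m:ℚ):ℚ):ℝ) := hb1
        _ ≤ ((2*(B*m)+1)^d : ℕ) := hb2
        _ ≤ ((2*(B:ℝ)+1) * m)^d := c2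
        _ = (2*(B:ℝ)+1)^d * (m:ℝ)^d := this
    have c4 : A * (m:ℝ) ≤ (2*(B:ℝ)+1)^d :=
      le_of_mul_le_mul_right c3 (by positivity)
    have c5 : (2*(B:ℝ)+1)^d < A * (m:ℝ) := by
      rw [div_lt_iff₀ hApos] at hM
      have : (M:ℝ) ≤ (m:ℝ) := by rw [hm]; push_cast; linarith
      nlinarith
    linarith
  -- choice of k and x
  obtain ⟨k₀, hk₀⟩ := exists_nat_gt (2 / ε)
  set k : ℕ := k₀ + 1 with hk
  have hkpos : (0:ℝ) < (k:ℝ) := by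
    rw [hk]
    push_cast
    linarith [Nat.cast_nonneg (α := ℝ) k₀]
  have hkε : 2 < (k:ℝ) * ε := by
    have hkk : 2/ε < (k:ℝ) := by
      refine hk₀.trans_le ?_
      rw [hk]
      push_cast
      linarith
    calc (2:ℝ) = (2/ε)*ε := by field_simp
      _ < (k:ℝ) * ε := mul_lt_mul_of_pos_right hkk hε
  set x : Fin d → ℤ := fun i => ⌈(k:ℝ) * c i⌉ with hx
  have hcube_sub : ∀ w : Fin d → ℝ, (∀ i, (x i:ℝ) - 1 ≤ w i ∧ w i ≤ x i) → w ∈ (k:ℝ) • P := by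
    intro w hw
    have hmem : w ∈ Metric.ball ((k:ℝ) • c) ((k:ℝ) * ε) := by
      rw [Metric.mem_ball, dist_eq_norm, pi_norm_lt_iff (by positivity)]
      intro i
      have h1 : (x i : ℝ) - 1 ≤ (k:ℝ) * c i := by
        have := Int.ceil_lt_add_one ((k:ℝ) * c i)
        simp only [hx] at *
        linarith
      have h2 : (k:ℝ) * c i ≤ (x i : ℝ) := Int.le_ceil _
      have h3 := hw i
      have hsub : (w - (k:ℝ) • c) i = w i - (k:ℝ) * c i := by
        simp [Pi.sub_apply, Pi.smul_apply, smul_eq_mul]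
      rw [hsub, Real.norm_eq_abs, abs_lt]
      constructor <;> [linarith [h3.1, h3.2]; linarith [h3.1, h3.2]]
    have hbeq : (k:ℝ) • Metric.ball c ε = Metric.ball ((k:ℝ)•c) ((k:ℝ)*ε) := by
      rw [smul_ball (ne_of_gt hkpos)]
      congr 1
      rw [Real.norm_eq_abs, abs_of_pos hkpos]
    rw [← hbeq] at hmem
    exact Set.smul_set_mono hballP hmem
  -- volume inequality
  have hvolm : ∀ m : ℕ, ((m:ℝ))^d * vol d P ≤
      ((latticePts d (((m+k:ℕ):ℝ) • P)).ncard : ℝ) := by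
    intro m
    have hcv := covering d P hPcvx k m x hcube_sub (hcount (m+k)).1
    have hsm : volume ((m:ℝ) • P) = ENNReal.ofReal ((m:ℝ)^d) * volume P := by
      rw [Measure.addHaar_smul]
      congr 1
      rw [Module.finrank_fin_fun, abs_pow, abs_of_nonneg (Nat.cast_nonneg m)]
    rw [hsm] at hcv
    have h2 := ENNReal.toReal_mono (by simp) hcv
    rw [ENNReal.toReal_mul, ENNReal.toReal_ofReal (by positivity)] at h2
    simpa [vol] using h2
  -- final bound and limit
  have hkey : ∀ m : ℕ, 1 ≤ m → vol d P ≤ ((2*((m:ℝ)+(k:ℝ))+1)/(m:ℝ))^d := by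
    intro m hm
    have h1 := hvolm m
    have hb := (hbounds ((m+k:ℕ)) (by positivity)).2
    rw [hevR (m+k), hLeval (m+k)] at hb
    have hbase : (1:ℝ) ≤ 2*((m+k:ℕ):ℝ)+1 := by
      have : (0:ℝ) ≤ ((m+k:ℕ):ℝ) := Nat.cast_nonneg _
      linarith
    have he2 : (2*((m+k:ℕ):ℝ)+1)^e ≤ (2*((m+k:ℕ):ℝ)+1)^d := pow_le_pow_right₀ hbase hed
    have h3 : (m:ℝ)^d * vol d P ≤ (2*((m:ℝ)+(k:ℝ))+1)^d := by
      have hcast : ((m+k:ℕ):ℝ) = (m:ℝ)+(k:ℝ) := by push_cast; ring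
      calc (m:ℝ)^d * vol d P ≤ ((latticePts d (((m+k:ℕ):ℝ) • P)).ncard : ℝ) := h1
        _ ≤ (2*((m+k:ℕ):ℝ)+1)^e := hb
        _ ≤ (2*((m+k:ℕ):ℝ)+1)^d := he2
        _ = (2*((m:ℝ)+(k:ℝ))+1)^d := by rw [hcast]
    have hm0 : (0:ℝ) < (m:ℝ)^d := by
      have : (0:ℝ) < (m:ℝ) := by exact_mod_cast hm
      positivity
    rw [div_pow, le_div_iff₀ hm0]
    linarith [h3]
  have htend : Filter.Tendsto (fun m : ℕ => ((2*((m:ℝ)+(k:ℝ))+1)/(m:ℝ))^d)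
      Filter.atTop (nhds (2^d)) := by
    apply Filter.Tendsto.pow
    have heq : ∀ᶠ m : ℕ in Filter.atTop,
        2 + (2*(k:ℝ)+1)/(m:ℝ) = (2*((m:ℝ)+(k:ℝ))+1)/(m:ℝ) := by
      filter_upwards [Filter.eventually_gt_atTop 0] with m hm
      have hm0 : (m:ℝ) ≠ 0 := by positivity
      field_simp
      ring
    have h0 : Filter.Tendsto (fun m : ℕ => 2 + (2*(k:ℝ)+1)/(m:ℝ))
        Filter.atTop (nhds 2) := by
      have h2 : Filter.Tendsto (fun _ : ℕ => (2:ℝ)) Filter.atTop (nhds 2) :=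
        tendsto_const_nhds
      have := h2.add (tendsto_const_div_atTop_nhds_zero_nat (2*(k:ℝ)+1))
      simpa using this
    exact h0.congr' heq
  exact ge_of_tendsto htend
    (by filter_upwards [Filter.eventually_ge_atTop 1] with m hm using hkey m hm)
end
end

section
/- Let P ⊂ ℝ^d be a d-dimensional real reflexive polytope (i.e. reflexive and every complex root of L_P has imaginary part 0) such that every root z of L_P satisfies −1 < Re z < 0. Then vol(P) ≥ 2^d. -/
open Pointwise MeasureTheory Polynomial

noncomputable section

private lemma ms_prod_nonneg (s : Multiset ℝ) (h : ∀ x ∈ s, 0 ≤ x) : 0 ≤ s.prod := by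
  induction s using Multiset.induction with
  | empty => simp
  | cons a s ih =>
    rw [Multiset.prod_cons]
    exact mul_nonneg (h a (Multiset.mem_cons_self a s))
      (ih fun x hx => h x (Multiset.mem_cons_of_mem hx))

private lemma ms_prod_pos (s : Multiset ℝ) (h : ∀ x ∈ s, 0 < x) : 0 < s.prod := by
  induction s using Multiset.induction with
  | empty => simp
  | cons a s ih =>
    rw [Multiset.prod_cons]
    exact mul_pos (h a (Multiset.mem_cons_self a s))
      (ih fun x hx => h x (Multiset.mem_cons_of_mem hx))

private lemma ms_prod_le_pow (s : Multiset ℝ) (c : ℝ)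
    (h : ∀ x ∈ s, 0 ≤ x ∧ x ≤ c) : s.prod ≤ c ^ Multiset.card s := by
  induction s using Multiset.induction with
  | empty => simp
  | cons a s ih =>
    have hc : 0 ≤ c := le_trans (h a (Multiset.mem_cons_self a s)).1
      (h a (Multiset.mem_cons_self a s)).2
    rw [Multiset.prod_cons, Multiset.card_cons, pow_succ, mul_comm (c ^ Multiset.card s) c]
    exact mul_le_mul (h a (Multiset.mem_cons_self a s)).2
      (ih fun x hx => h x (Multiset.mem_cons_of_mem hx))
      (ms_prod_nonneg s fun x hx => (h x (Multiset.mem_cons_of_mem hx)).1) hc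

private lemma ms_pow_le_prod (s : Multiset ℝ) (b : ℝ) (hb : 0 ≤ b)
    (h : ∀ x ∈ s, b ≤ x) : b ^ Multiset.card s ≤ s.prod := by
  induction s using Multiset.induction with
  | empty => simp
  | cons a s ih =>
    rw [Multiset.prod_cons, Multiset.card_cons, pow_succ, mul_comm (b ^ Multiset.card s) b]
    exact mul_le_mul (h a (Multiset.mem_cons_self a s))
      (ih fun x hx => h x (Multiset.mem_cons_of_mem hx))
      (pow_nonneg hb _) (le_trans hb (h a (Multiset.mem_cons_self a s)))

/-- cube of integer points with sup-norm ≤ N -/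
private def icube (d N : ℕ) : Finset (Fin d → ℤ) :=
  Fintype.piFinset fun _ => Finset.Icc (-(N:ℤ)) N

private lemma mem_icube {d N : ℕ} {x : Fin d → ℤ} :
    x ∈ icube d N ↔ ∀ i, |x i| ≤ (N:ℤ) := by
  simp [icube, Fintype.mem_piFinset, abs_le]

private lemma card_icube (d N : ℕ) : (icube d N).card = (2*N+1)^d := by
  simp [icube, Fintype.card_piFinset, Int.card_Icc]
  congr 1
  omega

private lemma natDegree_diff_lt (L : Polynomial ℚ) (hL : L.natDegree ≠ 0) :
    (L.comp (X + 1) - L).natDegree < L.natDegree := by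
  have hLne : L ≠ 0 := fun h => hL (by simp [h])
  have hq : ((X + 1 : ℚ[X])).natDegree = 1 := by
    simpa using natDegree_X_add_C (1 : ℚ)
  have hcompdeg : (L.comp (X + 1)).natDegree = L.natDegree := by
    rw [natDegree_comp, hq, mul_one]
  have hcomplc : (L.comp (X + 1)).leadingCoeff = L.leadingCoeff := by
    rw [leadingCoeff_comp (by rw [hq]; norm_num)]
    have : (X + 1 : ℚ[X]).leadingCoeff = 1 := by
      simpa using leadingCoeff_X_add_C (1 : ℚ)
    simp [this]
  by_cases h0 : L.comp (X + 1) - L = 0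
  · rw [h0]
    simpa using Nat.pos_of_ne_zero hL
  · have hcompne : L.comp (X + 1) ≠ 0 := by
      intro h
      rw [h] at hcompdeg
      simp at hcompdeg
      exact hL hcompdeg.symm
    have hdeq : (L.comp (X + 1)).degree = L.degree := by
      rw [degree_eq_natDegree hcompne, degree_eq_natDegree hLne, hcompdeg]
    have := degree_sub_lt hdeq hcompne hcomplc
    rw [degree_eq_natDegree h0, hdeq, degree_eq_natDegree hLne] at this
    exact_mod_cast this

private lemma int_at_neg_one_aux : ∀ (n : ℕ) (L : Polynomial ℚ), L.natDegree ≤ n →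
    (∀ m : ℕ, ∃ k : ℤ, L.eval (m:ℚ) = k) → ∃ k : ℤ, L.eval (-1) = k := by
  intro n
  induction n with
  | zero =>
    intro L h hm
    obtain ⟨a, ha⟩ := natDegree_eq_zero.mp (Nat.le_zero.mp h)
    obtain ⟨k, hk⟩ := hm 0
    exact ⟨k, by rw [← ha] at hk ⊢; simpa using hk⟩
  | succ n ih =>
    intro L h hm
    by_cases h0 : L.natDegree = 0
    · obtain ⟨a, ha⟩ := natDegree_eq_zero.mp h0
      obtain ⟨k, hk⟩ := hm 0
      exact ⟨k, by rw [← ha] at hk ⊢; simpa using hk⟩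
    · set D := L.comp (X + 1) - L with hD
      have hDdeg : D.natDegree ≤ n := by
        have h1 := natDegree_diff_lt L h0
        rw [← hD] at h1
        omega
      have hDval : ∀ m : ℕ, ∃ k : ℤ, D.eval (m:ℚ) = k := by
        intro m
        obtain ⟨k1, hk1⟩ := hm (m+1)
        obtain ⟨k2, hk2⟩ := hm m
        refine ⟨k1 - k2, ?_⟩
        rw [hD]
        simp only [eval_sub, eval_comp, eval_add, eval_X, eval_one]
        rw [show ((m:ℚ) + 1) = ((m+1 : ℕ) : ℚ) by push_cast; ring, hk1, hk2]
        push_cast; ring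
      obtain ⟨k, hk⟩ := ih D hDdeg hDval
      obtain ⟨k0, hk0⟩ := hm 0
      refine ⟨k0 - k, ?_⟩
      have hDe : D.eval (-1) = L.eval 0 - L.eval (-1) := by
        rw [hD]; simp [eval_comp]
      have h0e : L.eval 0 = (k0:ℚ) := by
        have := hk0
        rwa [Nat.cast_zero] at this
      rw [hDe, h0e] at hk
      push_cast
      linarith

private lemma int_at_neg_one (L : Polynomial ℚ)
    (hm : ∀ m : ℕ, ∃ k : ℤ, L.eval (m:ℚ) = k) : ∃ k : ℤ, L.eval (-1) = k :=
  int_at_neg_one_aux L.natDegree L le_rfl hm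

open scoped ENNReal

set_option maxHeartbeats 1000000 in
theorem statement3 (d : ℕ) (hd : 1 ≤ d) (P : Set (Fin d → ℝ)) (L : Polynomial ℚ)
    (hP : IsLatticePolytope d P) (hdim : IsFullDim d P) (href : IsReflexive d P)
    (hL : IsEhrhart d P L) (hreal : IsRealRooted L)
    (hCS : ∀ z ∈ cRoots L, -1 < z.re ∧ z.re < 0) :
    (2 : ℝ) ^ d ≤ vol d P := by
  classical
  -- ## Geometry setup
  obtain ⟨h0int, -⟩ := href
  have h0P : (0 : Fin d → ℝ) ∈ P := interior_subset h0int
  have hPne : P.Nonempty := ⟨0, h0P⟩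
  obtain ⟨V, hV⟩ := hP
  have hPconv : Convex ℝ P := by rw [hV]; exact convex_convexHull ℝ _
  have hPcomp : IsCompact P := by
    rw [hV]
    exact ((Set.toFinite _).image _).isCompact_convexHull ℝ
  have hPclosed : IsClosed P := hPcomp.isClosed
  obtain ⟨ε, hε, hball⟩ : ∃ ε > 0, Metric.ball 0 ε ⊆ P := by
    rw [mem_interior_iff_mem_nhds] at h0int
    exact Metric.mem_nhds_iff.mp h0int
  obtain ⟨R0, hR0⟩ := hPcomp.isBounded.subset_closedBall 0
  set R := max R0 1 with hRdef
  have hR1 : (1:ℝ) ≤ R := le_max_right _ _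
  have hRpos : (0:ℝ) < R := lt_of_lt_of_le zero_lt_one hR1
  have hsubR : P ⊆ Metric.closedBall 0 R :=
    hR0.trans (Metric.closedBall_subset_closedBall (le_max_left _ _))
  -- count function
  set cnt : ℕ → ℕ := fun m => (latticePts d ((m : ℝ) • P)).ncard with hcnt
  have hLcnt : ∀ m : ℕ, L.eval (m:ℚ) = (cnt m : ℚ) := hL
  -- norm of an integer vector cast
  have hnormcast : ∀ (x : Fin d → ℤ) (B : ℝ), 0 ≤ B →
      ((‖(fun i => (x i : ℝ))‖ ≤ B) ↔ ∀ i, |(x i : ℝ)| ≤ B) := by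
    intro x B hB
    rw [pi_norm_le_iff_of_nonneg hB]
    simp [Real.norm_eq_abs]
  -- lattice points of m•P lie in a cube
  have hsubcube : ∀ m : ℕ, latticePts d ((m : ℝ) • P) ⊆
      ↑(icube d (Nat.ceil ((m:ℝ) * R))) := by
    intro m x hx
    obtain ⟨p, hp, hpx⟩ := hx
    have hnp : ‖p‖ ≤ R := by
      have := hsubR hp
      rwa [Metric.mem_closedBall, dist_zero_right] at this
    have hnx : ‖(fun i => (x i : ℝ))‖ ≤ (m:ℝ) * R := by
      rw [← hpx, norm_smul]
      simp only [Real.norm_natCast]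
      exact mul_le_mul_of_nonneg_left hnp (Nat.cast_nonneg m)
    rw [hnormcast x _ (mul_nonneg (Nat.cast_nonneg m) (le_of_lt hRpos))] at hnx
    rw [Finset.mem_coe, mem_icube]
    intro i
    have h1 : |(x i : ℝ)| ≤ ((Nat.ceil ((m:ℝ) * R) : ℕ) : ℝ) :=
      le_trans (hnx i) (Nat.le_ceil _)
    rw [← Int.cast_abs] at h1
    exact_mod_cast h1
  have hfin : ∀ m : ℕ, (latticePts d ((m : ℝ) • P)).Finite := fun m =>
    Set.Finite.subset (Finset.finite_toSet _) (hsubcube m)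
  -- ## Upper bound on counts (crude)
  have hcnt_up : ∀ m : ℕ, (cnt m : ℝ) ≤ (3 * R * ((m:ℝ)+1))^d := by
    intro m
    have h1 : cnt m ≤ (2 * Nat.ceil ((m:ℝ) * R) + 1)^d := by
      rw [← card_icube, hcnt]
      rw [← Set.ncard_coe_finset (icube d (Nat.ceil ((m:ℝ) * R)))]
      exact Set.ncard_le_ncard (hsubcube m) (Finset.finite_toSet _)
    have h1' : (cnt m : ℝ) ≤ ((2 * Nat.ceil ((m:ℝ) * R) + 1 : ℕ) : ℝ)^d := by
      exact_mod_cast h1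
    refine h1'.trans (pow_le_pow_left₀ (Nat.cast_nonneg _) ?_ d)
    have hce : (Nat.ceil ((m:ℝ) * R) : ℝ) < (m:ℝ) * R + 1 :=
      Nat.ceil_lt_add_one (mul_nonneg (Nat.cast_nonneg m) (le_of_lt hRpos))
    push_cast
    nlinarith [Nat.cast_nonneg (α := ℝ) m]
  -- ## Lower bound on counts
  have hcnt_low : ∀ m : ℕ, 2 ≤ (m:ℝ) * ε → ((m:ℝ) * ε / 2)^d ≤ (cnt m : ℝ) := by
    intro m hm2
    have hmpos : (0:ℝ) < m := by
      rcases Nat.eq_zero_or_pos m with h | h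
      · rw [h] at hm2; simp at hm2; linarith
      · exact_mod_cast h
    set N := Nat.floor ((m:ℝ) * ε / 2) with hN
    have hNle : (N : ℝ) ≤ (m:ℝ) * ε / 2 := Nat.floor_le (by positivity)
    have hsub2 : ↑(icube d N) ⊆ latticePts d ((m : ℝ) • P) := by
      intro x hx
      rw [Finset.mem_coe, mem_icube] at hx
      show (fun i => (x i : ℝ)) ∈ (m : ℝ) • P
      rw [Set.mem_smul_set_iff_inv_smul_mem₀ (ne_of_gt hmpos)]
      apply hball
      rw [Metric.mem_ball, dist_zero_right, norm_smul]
      have hnx : ‖(fun i => (x i : ℝ))‖ ≤ (N:ℝ) := by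
        rw [hnormcast x _ (Nat.cast_nonneg N)]
        intro i
        have := hx i
        rw [← Int.cast_abs]
        exact_mod_cast this
      have : ‖((m:ℝ))⁻¹‖ = ((m:ℝ))⁻¹ := by
        rw [Real.norm_eq_abs, abs_of_pos (by positivity)]
      rw [this]
      calc ((m:ℝ))⁻¹ * ‖(fun i => (x i : ℝ))‖ ≤ ((m:ℝ))⁻¹ * ((m:ℝ) * ε / 2) := by
            apply mul_le_mul_of_nonneg_left (hnx.trans hNle) (by positivity)
        _ = ε / 2 := by field_simp
        _ < ε := by linarith
    have h1 : (2 * N + 1)^d ≤ cnt m := by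
      rw [← card_icube, hcnt]
      rw [← Set.ncard_coe_finset (icube d N)]
      exact Set.ncard_le_ncard hsub2 (hfin m)
    have h1' : (((2 * N + 1 : ℕ)) : ℝ)^d ≤ (cnt m : ℝ) := by
      exact_mod_cast h1
    refine le_trans (pow_le_pow_left₀ (by positivity) ?_ d) h1'
    have hNgt : (m:ℝ) * ε / 2 - 1 < N := Nat.sub_one_lt_floor _
    push_cast
    linarith
  -- ## Packing: count ≤ volume of enlarged body
  set c : ℝ := 2 / ε with hc
  have hcpos : 0 < c := by positivity
  have hfr : Module.finrank ℝ (Fin d → ℝ) = d := by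
    simp [Module.finrank_fintype_fun_eq_card]
  have hvolPfin : volume P ≠ ⊤ := hPcomp.measure_lt_top.ne
  have hpack : ∀ m : ℕ, (cnt m : ℝ) ≤ ((m:ℝ) + c)^d * vol d P := by
    intro m
    set S := latticePts d ((m : ℝ) • P) with hS
    set F := (hfin m).toFinset with hF
    set Q : (Fin d → ℤ) → Set (Fin d → ℝ) :=
      fun x => Set.univ.pi (fun i => Set.Ico ((x i : ℝ)) ((x i : ℝ) + 1)) with hQ
    have hQmeas : ∀ x, MeasurableSet (Q x) := fun x =>
      MeasurableSet.univ_pi fun i => measurableSet_Ico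
    have hQvol : ∀ x, volume (Q x) = 1 := by
      intro x
      rw [hQ]
      simp only []
      rw [volume_pi_pi]
      simp [Real.volume_Ico]
    have hQdisj : (↑F : Set (Fin d → ℤ)).PairwiseDisjoint Q := by
      intro x _ y _ hxy
      obtain ⟨i, hi⟩ : ∃ i, x i ≠ y i := by
        by_contra h
        push_neg at h
        exact hxy (funext h)
      rw [Function.onFun, Set.disjoint_left]
      intro z hz1 hz2
      have h1 := hz1 i (Set.mem_univ i)
      have h2 := hz2 i (Set.mem_univ i)
      simp only [Set.mem_Ico] at h1 h2
      rcases lt_or_gt_of_ne hi with h | h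
      · have h' : x i + 1 ≤ y i := by omega
        have : (x i : ℝ) + 1 ≤ (y i : ℝ) := by exact_mod_cast h'
        linarith [h1.1, h1.2, h2.1, h2.2]
      · have h' : y i + 1 ≤ x i := by omega
        have : (y i : ℝ) + 1 ≤ (x i : ℝ) := by exact_mod_cast h'
        linarith [h1.1, h1.2, h2.1, h2.2]
    have hQsub : ∀ x ∈ F, Q x ⊆ ((m:ℝ) + c) • P := by
      intro x hxF z hz
      have hxS' : x ∈ S := (Set.Finite.mem_toFinset _).mp hxF
      have hxS : (fun i => (x i : ℝ)) ∈ (m:ℝ) • P := hxS'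
      have hw : z - (fun i => (x i : ℝ)) ∈ c • P := by
        rw [Set.mem_smul_set_iff_inv_smul_mem₀ (ne_of_gt hcpos)]
        apply hball
        rw [Metric.mem_ball, dist_zero_right, norm_smul]
        have hnw : ‖z - (fun i => (x i : ℝ))‖ ≤ 1 := by
          rw [pi_norm_le_iff_of_nonneg zero_le_one]
          intro i
          have h1 := hz i (Set.mem_univ i)
          simp only [Set.mem_Ico] at h1
          rw [Pi.sub_apply, Real.norm_eq_abs, abs_le]
          constructor <;> [linarith [h1.1]; linarith [h1.2]]
        have hcinv : ‖c⁻¹‖ = c⁻¹ := by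
          rw [Real.norm_eq_abs, abs_of_pos (by positivity)]
        rw [hcinv]
        calc c⁻¹ * ‖z - (fun i => (x i : ℝ))‖ ≤ c⁻¹ * 1 :=
              mul_le_mul_of_nonneg_left hnw (by positivity)
          _ = ε / 2 := by rw [hc]; field_simp
          _ < ε := by linarith
      have hsplit : ((m:ℝ) + c) • P = (m:ℝ) • P + c • P :=
        hPconv.add_smul (Nat.cast_nonneg m) (le_of_lt hcpos)
      rw [hsplit]
      have hmem := Set.add_mem_add hxS hw
      have heq : (fun i => (x i : ℝ)) + (z - fun i => (x i : ℝ)) = z := by abel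
      rwa [heq] at hmem
    have hcard : (F.card : ℝ≥0∞) = volume (⋃ x ∈ F, Q x) := by
      rw [measure_biUnion_finset hQdisj (fun x _ => hQmeas x)]
      simp [hQvol]
    have hle1 : volume (⋃ x ∈ F, Q x) ≤ volume (((m:ℝ) + c) • P) :=
      measure_mono (Set.iUnion₂_subset hQsub)
    have hsmul : volume (((m:ℝ) + c) • P) = ENNReal.ofReal (((m:ℝ) + c)^d) * volume P := by
      rw [Measure.addHaar_smul_of_nonneg volume (by positivity) P, hfr]
    have hcnt_eq : cnt m = F.card := Set.ncard_eq_toFinset_card _ (hfin m)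
    have hEN : (cnt m : ℝ≥0∞) ≤ ENNReal.ofReal (((m:ℝ)+c)^d) * volume P := by
      rw [hcnt_eq]
      push_cast
      rw [hcard]
      rw [hsmul] at hle1
      exact hle1
    have hRfin : ENNReal.ofReal (((m:ℝ)+c)^d) * volume P ≠ ⊤ :=
      ENNReal.mul_ne_top ENNReal.ofReal_ne_top hvolPfin
    calc (cnt m : ℝ) = ((cnt m : ℝ≥0∞)).toReal := by simp
      _ ≤ (ENNReal.ofReal (((m:ℝ)+c)^d) * volume P).toReal :=
          ENNReal.toReal_mono hRfin hEN
      _ = ((m:ℝ)+c)^d * vol d P := by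
          rw [ENNReal.toReal_mul, ENNReal.toReal_ofReal (by positivity)]
          rfl
  -- ## Polynomial side
  have hcnt0 : cnt 0 = 1 := by
    rw [hcnt]
    simp only [Nat.cast_zero]
    rw [Set.zero_smul_set hPne, ← Set.singleton_zero]
    have hlat : latticePts d ({0} : Set (Fin d → ℝ)) = {0} := by
      ext x
      simp only [latticePts, Set.mem_setOf_eq, Set.mem_singleton_iff]
      constructor
      · intro h
        funext i
        have h2 : (x i : ℝ) = 0 := by simpa using congrFun h i
        exact_mod_cast h2
      · intro h
        rw [h]
        funext i
        simp
    rw [hlat, Set.ncard_singleton]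
  have hLeval0 : L.eval 0 = 1 := by
    have h := hLcnt 0
    rw [Nat.cast_zero, hcnt0] at h
    simpa using h
  have hLne : L ≠ 0 := by
    intro h
    rw [h] at hLeval0
    simp at hLeval0
  set Lc := L.map (algebraMap ℚ ℂ) with hLcdef
  have hLcne : Lc ≠ 0 := (Polynomial.map_ne_zero_iff (algebraMap ℚ ℂ).injective).mpr hLne
  have hsplits : Lc.Splits := IsAlgClosed.splits Lc
  have hfact : Lc = C Lc.leadingCoeff * (Lc.roots.map fun a => X - C a).prod :=
    hsplits.eq_prod_roots
  set r : Multiset ℝ := Lc.roots.map Complex.re with hr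
  set n := Multiset.card r with hnn
  have hrmem : ∀ x ∈ r, -1 < x ∧ x < 0 := by
    intro x hx
    rw [hr] at hx
    obtain ⟨z, hz, rfl⟩ := Multiset.mem_map.mp hx
    exact hCS z hz
  have hroots_eq : r.map (fun x : ℝ => (x:ℂ)) = Lc.roots := by
    rw [hr, Multiset.map_map]
    calc Lc.roots.map ((fun x : ℝ => (x:ℂ)) ∘ Complex.re)
        = Lc.roots.map id := Multiset.map_congr rfl (fun z hz => by
          have him : z.im = 0 := hreal z hz
          apply Complex.ext
          · simp
          · simp [him])
      _ = Lc.roots := Multiset.map_id _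
  set aR : ℝ := ((L.leadingCoeff : ℚ) : ℝ) with haR
  have hevalC : ∀ q : ℚ, Lc.eval ((q:ℂ)) = ((L.eval q : ℚ) : ℂ) := by
    intro q
    rw [hLcdef, Polynomial.eval_map]
    have h := Polynomial.eval₂_at_apply (algebraMap ℚ ℂ) (p := L) q
    simpa using h
  have hEvC : ∀ t : ℂ, Lc.eval t = ((L.leadingCoeff : ℚ) : ℂ) * (Lc.roots.map fun a => t - a).prod := by
    intro t
    conv_lhs => rw [hfact]
    rw [Polynomial.eval_mul, Polynomial.eval_C]
    congr 1
    · rw [Polynomial.leadingCoeff_map_of_injective (algebraMap ℚ ℂ).injective]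
      exact eq_ratCast (algebraMap ℚ ℂ) _
    · simp [Polynomial.eval_multiset_prod, Multiset.map_map]
  have hprodC : ∀ t : ℝ, (Lc.roots.map fun a => (t:ℂ) - a).prod
      = (((r.map fun x => t - x).prod : ℝ) : ℂ) := by
    intro t
    rw [← hroots_eq, Multiset.map_map]
    have h := map_multiset_prod Complex.ofRealHom (r.map fun x => t - x)
    conv_rhs => rw [← Complex.ofRealHom_eq_coe, h]
    rw [Multiset.map_map, hr, Multiset.map_map, Multiset.map_map]
    refine congrArg Multiset.prod (Multiset.map_congr rfl ?_)
    intro z hz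
    simp
  have hEv : ∀ q : ℚ, ((L.eval q : ℚ) : ℝ) = aR * (r.map fun x => ((q:ℝ) - x)).prod := by
    intro q
    rw [← Complex.ofReal_inj]
    have h1 : (((L.eval q : ℚ) : ℝ) : ℂ) = ((L.eval q : ℚ) : ℂ) := by push_cast; ring
    rw [h1, ← hevalC q]
    have h2 : ((q:ℚ):ℂ) = (((q:ℝ)):ℂ) := by push_cast; ring
    rw [h2, hEvC, hprodC, haR]
    push_cast
    ring
  -- evaluate at 0
  have hEv0 : (1:ℝ) = aR * (r.map fun x => -x).prod := by
    have h := hEv 0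
    rw [hLeval0] at h
    simpa using h
  have hp0pos : 0 < (r.map fun x => -x).prod := by
    apply ms_prod_pos
    intro y hy
    obtain ⟨x, hx, rfl⟩ := Multiset.mem_map.mp hy
    have := hrmem x hx
    linarith [this.2]
  have haRpos : 0 < aR := by
    by_contra h
    push_neg at h
    have : aR * (r.map fun x => -x).prod ≤ 0 :=
      mul_nonpos_of_nonpos_of_nonneg h hp0pos.le
    linarith
  -- evaluate at -1
  have hint : ∃ k : ℤ, L.eval (-1) = (k:ℚ) :=
    int_at_neg_one L (fun m => ⟨cnt m, hLcnt m⟩)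
  have hne1 : L.eval (-1) ≠ 0 := by
    intro h0
    have hroot : (-1:ℂ) ∈ Lc.roots := by
      rw [Polynomial.mem_roots hLcne]
      have h1 : ((-1:ℚ):ℂ) = (-1:ℂ) := by push_cast; ring
      have h2 := hevalC (-1)
      rw [h1, h0] at h2
      simpa [Polynomial.IsRoot] using h2
    have := (hCS (-1) hroot).1
    simp at this
  have habs1 : (1:ℝ) ≤ |((L.eval (-1) : ℚ) : ℝ)| := by
    obtain ⟨k, hk⟩ := hint
    have hkne : k ≠ 0 := by
      intro h
      rw [h] at hk
      exact hne1 (by simpa using hk)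
    rw [hk]
    have : (1:ℤ) ≤ |k| := Int.one_le_abs hkne
    calc (1:ℝ) ≤ ((|k|:ℤ):ℝ) := by exact_mod_cast this
      _ = |((k:ℚ):ℝ)| := by push_cast; ring
  set p1 : ℝ := (r.map fun x => 1 + x).prod with hp1
  have hp1pos : 0 < p1 := by
    apply ms_prod_pos
    intro y hy
    obtain ⟨x, hx, rfl⟩ := Multiset.mem_map.mp hy
    have := hrmem x hx
    linarith [this.1]
  have hEvm1 : ((L.eval (-1) : ℚ) : ℝ) = aR * ((-1:ℝ)^n * p1) := by
    have h := hEv (-1)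
    have h1 : (((-1:ℚ)):ℝ) = (-1:ℝ) := by push_cast; ring
    rw [h1] at h
    rw [h]
    congr 1
    have h2 : (r.map fun x => (-1:ℝ) - x) = (r.map fun x => 1 + x).map Neg.neg := by
      conv_rhs => rw [Multiset.map_map]
      apply Multiset.map_congr rfl
      intro x hx
      simp only [Function.comp_apply]
      ring
    rw [h2, Multiset.prod_map_neg, Multiset.card_map, hp1, hnn]
  have hkey : (1:ℝ) ≤ aR * p1 := by
    have h1 : |((L.eval (-1) : ℚ) : ℝ)| = aR * p1 := by
      rw [hEvm1, abs_mul, abs_mul, abs_pow, abs_neg, abs_one, one_pow, one_mul,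
        abs_of_pos haRpos, abs_of_pos hp1pos]
    linarith [habs1, h1.le, h1.ge]
  -- the quarter bound
  have hquarter : ((r.map fun x => -x).prod) * p1 ≤ (1/4:ℝ)^n := by
    have hm : ((r.map fun x => -x).prod) * p1 = (r.map fun x => (-x) * (1+x)).prod := by
      rw [hp1, ← Multiset.prod_map_mul]
    rw [hm]
    have := ms_prod_le_pow (r.map fun x => (-x) * (1+x)) (1/4) ?_
    · rwa [Multiset.card_map, ← hnn] at this
    · intro y hy
      obtain ⟨x, hx, rfl⟩ := Multiset.mem_map.mp hy
      have hx' := hrmem x hx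
      constructor
      · nlinarith [hx'.1, hx'.2]
      · nlinarith [sq_nonneg (x + 1/2)]
  have haR2 : (2:ℝ)^n ≤ aR := by
    have h1 : (1:ℝ) ≤ aR^2 * ((r.map fun x => -x).prod * p1) := by
      have he : aR^2 * ((r.map fun x => -x).prod * p1)
          = (aR * (r.map fun x => -x).prod) * (aR * p1) := by ring
      rw [he, ← hEv0, one_mul]
      exact hkey
    have h2 : aR^2 * ((r.map fun x => -x).prod * p1) ≤ aR^2 * (1/4)^n :=
      mul_le_mul_of_nonneg_left hquarter (sq_nonneg aR)
    have h3 : ((1:ℝ)/4)^n * ((2:ℝ)^n * (2:ℝ)^n) = 1 := by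
      rw [← mul_pow, ← mul_pow]
      norm_num
    have h12 : (1:ℝ) ≤ aR^2 * (1/4)^n := h1.trans h2
    have h4 : (2:ℝ)^n * (2:ℝ)^n ≤ aR^2 := by
      calc (2:ℝ)^n * 2^n = (2^n * 2^n) * 1 := by ring
        _ ≤ (2^n * 2^n) * (aR^2 * (1/4)^n) :=
            mul_le_mul_of_nonneg_left h12 (by positivity)
        _ = aR^2 * ((1/4)^n * (2^n * 2^n)) := by ring
        _ = aR^2 := by rw [h3]; ring
    by_contra hcon
    push_neg at hcon
    have := mul_self_lt_mul_self haRpos.le hcon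
    linarith
  -- ## Growth bounds from the factorization
  have hcast2 : ∀ m : ℕ, ((L.eval ((m:ℕ):ℚ) : ℚ) : ℝ) = (cnt m : ℝ) := by
    intro m
    rw [hLcnt m]
    push_cast
    ring
  have hgrow_low : ∀ m : ℕ, aR * (m:ℝ)^n ≤ (cnt m : ℝ) := by
    intro m
    have h := hEv (m:ℚ)
    rw [hcast2 m] at h
    have hc1 : (((m:ℚ)):ℝ) = (m:ℝ) := by push_cast; ring
    rw [hc1] at h
    rw [h]
    apply mul_le_mul_of_nonneg_left _ haRpos.le
    have hb := ms_pow_le_prod (r.map fun x => (m:ℝ) - x) (m:ℝ) (Nat.cast_nonneg m) ?_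
    · rwa [Multiset.card_map, ← hnn] at hb
    · intro y hy
      obtain ⟨x, hx, rfl⟩ := Multiset.mem_map.mp hy
      have hxr := hrmem x hx
      linarith [hxr.2]
  have hgrow_up : ∀ m : ℕ, (cnt m : ℝ) ≤ aR * ((m:ℝ)+1)^n := by
    intro m
    have h := hEv (m:ℚ)
    rw [hcast2 m] at h
    have hc1 : (((m:ℚ)):ℝ) = (m:ℝ) := by push_cast; ring
    rw [hc1] at h
    rw [h]
    apply mul_le_mul_of_nonneg_left _ haRpos.le
    have hb := ms_prod_le_pow (r.map fun x => (m:ℝ) - x) ((m:ℝ)+1) ?_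
    · rwa [Multiset.card_map, ← hnn] at hb
    · intro y hy
      obtain ⟨x, hx, rfl⟩ := Multiset.mem_map.mp hy
      have hxr := hrmem x hx
      constructor
      · linarith [hxr.2, Nat.cast_nonneg (α := ℝ) m]
      · linarith [hxr.1]
  -- ## n = d
  have hnled : n ≤ d := by
    by_contra hcon
    push_neg at hcon
    set M : ℕ := Nat.ceil ((6*R)^d / aR) + 1 with hM
    have hM1 : 1 ≤ M := by omega
    have hMge1 : (1:ℝ) ≤ (M:ℝ) := by exact_mod_cast hM1
    have hMR : (6*R)^d / aR < (M:ℝ) := by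
      have h := Nat.le_ceil ((6*R)^d / aR)
      rw [hM]
      push_cast
      linarith
    have h1 : aR * (M:ℝ)^n ≤ (3*R*((M:ℝ)+1))^d := (hgrow_low M).trans (hcnt_up M)
    have h2 : (3*R*((M:ℝ)+1))^d ≤ ((6*R)*(M:ℝ))^d := by
      apply pow_le_pow_left₀ (by positivity)
      nlinarith
    have h3 : (M:ℝ)^(d+1) ≤ (M:ℝ)^n := pow_le_pow_right₀ hMge1 hcon
    have h4 : (aR * (M:ℝ)) * (M:ℝ)^d ≤ ((6*R)^d) * (M:ℝ)^d := by
      calc (aR * (M:ℝ)) * (M:ℝ)^d = aR * (M:ℝ)^(d+1) := by ring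
        _ ≤ aR * (M:ℝ)^n := mul_le_mul_of_nonneg_left h3 haRpos.le
        _ ≤ (3*R*((M:ℝ)+1))^d := h1
        _ ≤ ((6*R)*(M:ℝ))^d := h2
        _ = ((6*R)^d) * (M:ℝ)^d := by rw [mul_pow]
    have h5 : aR * (M:ℝ) ≤ (6*R)^d :=
      le_of_mul_le_mul_right h4 (pow_pos (by linarith) d)
    rw [div_lt_iff₀ haRpos] at hMR
    nlinarith
  have hdlen : d ≤ n := by
    by_contra hcon
    push_neg at hcon
    set M : ℕ := Nat.ceil (max (2/ε) ((aR * 2^n) / (ε/2)^d)) + 1 with hM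
    have hM1 : 1 ≤ M := by omega
    have hMge1 : (1:ℝ) ≤ (M:ℝ) := by exact_mod_cast hM1
    have hMmax : max (2/ε) ((aR * 2^n) / (ε/2)^d) < (M:ℝ) := by
      have h := Nat.le_ceil (max (2/ε) ((aR * 2^n) / (ε/2)^d))
      rw [hM]
      push_cast
      linarith
    have hM2 : 2/ε < (M:ℝ) := lt_of_le_of_lt (le_max_left _ _) hMmax
    have hM3 : (aR * 2^n) / (ε/2)^d < (M:ℝ) := lt_of_le_of_lt (le_max_right _ _) hMmax
    have h0 : 2 ≤ (M:ℝ) * ε := by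
      rw [div_lt_iff₀ hε] at hM2
      linarith
    have h1 : ((M:ℝ) * ε / 2)^d ≤ aR * ((M:ℝ)+1)^n := (hcnt_low M h0).trans (hgrow_up M)
    have h2 : aR * ((M:ℝ)+1)^n ≤ aR * ((2:ℝ)*(M:ℝ))^n := by
      apply mul_le_mul_of_nonneg_left _ haRpos.le
      apply pow_le_pow_left₀ (by linarith)
      linarith
    have hnd1 : n ≤ d - 1 := by omega
    have h3 : (M:ℝ)^n ≤ (M:ℝ)^(d-1) := pow_le_pow_right₀ hMge1 hnd1
    have hdd : d = (d-1) + 1 := by omega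
    have h4 : ((ε/2)^d * (M:ℝ)) * (M:ℝ)^(d-1) ≤ (aR * 2^n) * (M:ℝ)^(d-1) := by
      calc ((ε/2)^d * (M:ℝ)) * (M:ℝ)^(d-1) = (ε/2)^d * (M:ℝ)^((d-1)+1) := by
            rw [pow_succ]; ring
        _ = (ε/2)^d * (M:ℝ)^d := by rw [← hdd]
        _ = ((M:ℝ) * ε / 2)^d := by rw [← mul_pow]; congr 1; ring
        _ ≤ aR * ((M:ℝ)+1)^n := h1
        _ ≤ aR * ((2:ℝ)*(M:ℝ))^n := h2
        _ = (aR * 2^n) * (M:ℝ)^n := by rw [mul_pow]; ring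
        _ ≤ (aR * 2^n) * (M:ℝ)^(d-1) := by
            apply mul_le_mul_of_nonneg_left h3 (by positivity)
    have h5 : (ε/2)^d * (M:ℝ) ≤ aR * 2^n :=
      le_of_mul_le_mul_right h4 (pow_pos (by linarith) (d-1))
    rw [div_lt_iff₀ (by positivity : (0:ℝ) < (ε/2)^d)] at hM3
    nlinarith
  have hnd : n = d := le_antisymm hnled hdlen
  -- ## vol ≥ aR via limit
  have hvol_ge : ∀ m : ℕ, 1 ≤ m → aR ≤ vol d P * (1 + c/(m:ℝ))^d := by
    intro m hm
    have hmpos : (0:ℝ) < m := by exact_mod_cast hm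
    have h1 : aR * (m:ℝ)^d ≤ ((m:ℝ)+c)^d * vol d P := by
      have h := (hgrow_low m).trans (hpack m)
      rwa [hnd] at h
    have h2 : ((m:ℝ)+c)^d = (1 + c/(m:ℝ))^d * (m:ℝ)^d := by
      rw [← mul_pow]
      congr 1
      field_simp
    have h3 : aR * (m:ℝ)^d ≤ (vol d P * (1 + c/(m:ℝ))^d) * (m:ℝ)^d := by
      calc aR * (m:ℝ)^d ≤ ((m:ℝ)+c)^d * vol d P := h1
        _ = (vol d P * (1 + c/(m:ℝ))^d) * (m:ℝ)^d := by rw [h2]; ring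
    exact le_of_mul_le_mul_right h3 (pow_pos hmpos d)
  have htend : Filter.Tendsto (fun m : ℕ => vol d P * (1 + c/(m:ℝ))^d)
      Filter.atTop (nhds (vol d P)) := by
    have h1 := tendsto_const_div_atTop_nhds_zero_nat c
    have h2 := ((h1.const_add 1).pow d).const_mul (vol d P)
    simpa using h2
  have hfinal : aR ≤ vol d P :=
    ge_of_tendsto htend (Filter.eventually_atTop.mpr ⟨1, fun m hm => hvol_ge m hm⟩)
  calc (2:ℝ)^d = 2^n := by rw [hnd]
    _ ≤ aR := haR2
    _ ≤ vol d P := hfinal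
end
end

section
/- Let P ⊂ ℝ² be a 2-dimensional reflexive polytope with δ-vector (1, δ_1, 1). Then either both roots of L_P are of the form −1/2 ± bi with b ∈ ℝ (P is a CL-polytope), or both roots are real of the form a and −1−a with a ∈ ℝ (P is real). Moreover: P is a CL-polytope ⟺ δ_1 ≤ 6 ⟺ vol(P) ≤ 4 ⟺ |P ∩ ℤ²| ≤ 9; and P is real ⟺ δ_1 ≥ 6 ⟺ vol(P) ≥ 4 ⟺ |P ∩ ℤ²| ≥ 9. In the real case every root a satisfies −1 < a < 0. -/
open Pointwise MeasureTheory Polynomial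

noncomputable section

open Filter ENNReal

lemma cast_choose_two (n : ℕ) : ((n.choose 2 : ℕ) : ℚ) = (n:ℚ) * ((n:ℚ)-1) / 2 := by
  rcases n with _ | k
  · simp
  · rw [Nat.choose_two_right]
    have h2 : 2 ∣ (k+1) * ((k+1)-1) := by
      simpa [Nat.succ_sub_one, mul_comm] using (Nat.even_mul_succ_self k).two_dvd
    rw [Nat.cast_div h2 (by norm_num)]
    push_cast [Nat.succ_sub_one]
    ring


lemma L_explicit (L : Polynomial ℚ) (δ1 : ℤ) (hδ : HasDeltaVector 2 L ![1, δ1, 1]) :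
    L = C (((δ1:ℚ)+2)/2) * (X^2 + X) + 1 := by
  apply Polynomial.eq_of_infinite_eval_eq
  apply Set.infinite_of_injective_forall_mem (f := fun m : ℕ => (m : ℚ))
  case hi => exact fun a b h => Nat.cast_injective h
  intro m
  simp only [Set.mem_setOf_eq]
  rw [hδ m]
  rw [Fin.sum_univ_three]
  simp only [Matrix.cons_val_zero, Matrix.cons_val_one, Matrix.head_cons, Fin.val_zero,
    Fin.val_one, Fin.val_two, Matrix.cons_val_two, Matrix.tail_cons]
  have e0 : 2 + m - 0 = m + 2 := by omega
  have e1 : 2 + m - 1 = m + 1 := by omega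
  have e2 : 2 + m - 2 = m := by omega
  rw [e0, e1, e2, cast_choose_two, cast_choose_two, cast_choose_two]
  push_cast
  simp only [eval_add, eval_mul, eval_C, eval_pow, eval_X, eval_one]
  ring

lemma roots_pair (A : ℚ) (hA : A ≠ 0) (z₁ z₂ : ℂ) (hsum : z₁ + z₂ = -1)
    (hprod : (A:ℂ) * (z₁ * z₂) = 1) :
    cRoots (C A * (X^2 + X) + 1) = {z₁, z₂} := by
  have ha : (A:ℂ) ≠ 0 := by exact_mod_cast hA
  have hmap : (C A * (X^2 + X) + 1 : Polynomial ℚ).map (algebraMap ℚ ℂ)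
      = C (A:ℂ) * (X^2 + X) + 1 := by
    simp [Polynomial.map_add, Polynomial.map_mul, Polynomial.map_pow]
  have hfac : (C (A:ℂ) * (X^2 + X) + 1 : Polynomial ℂ)
      = C (A:ℂ) * ((X - C z₁) * (X - C z₂)) := by
    have : ((X - C z₁) * (X - C z₂) : Polynomial ℂ)
        = X^2 - (C z₁ + C z₂) * X + C z₁ * C z₂ := by ring
    rw [this, ← C_add, ← C_mul, hsum, mul_add, mul_add, mul_sub, ← C_mul, hprod]
    simp only [map_neg, C_1]
    ring
  unfold cRoots
  rw [hmap, hfac, roots_C_mul _ ha, roots_mul (mul_ne_zero (X_sub_C_ne_zero z₁) (X_sub_C_ne_zero z₂)),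
    roots_X_sub_C, roots_X_sub_C]
  rfl

def icast (x : Fin 2 → ℤ) : Fin 2 → ℝ := fun i => (x i : ℝ)

def cube (x : Fin 2 → ℤ) : Set (Fin 2 → ℝ) :=
  Set.univ.pi fun i => Set.Ico (x i : ℝ) ((x i : ℝ) + 1)

lemma mem_cube {x : Fin 2 → ℤ} {z : Fin 2 → ℝ} :
    z ∈ cube x ↔ ∀ i, (x i : ℝ) ≤ z i ∧ z i < (x i : ℝ) + 1 := by
  simp [cube, Set.mem_pi]

lemma volume_cube (x : Fin 2 → ℤ) : volume (cube x) = 1 := by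
  rw [cube, volume_pi_pi]; simp [Real.volume_Ico]

lemma measurableSet_cube (x : Fin 2 → ℤ) : MeasurableSet (cube x) :=
  MeasurableSet.univ_pi fun i => measurableSet_Ico

lemma cube_disjoint {x y : Fin 2 → ℤ} (h : x ≠ y) : Disjoint (cube x) (cube y) := by
  rw [Set.disjoint_left]
  intro z hz hz'
  apply h; funext i
  have h1 := (mem_cube.1 hz) i
  have h2 := (mem_cube.1 hz') i
  have e1 : x i = ⌊z i⌋ := by
    symm; rw [Int.floor_eq_iff]; exact ⟨h1.1, by push_cast; exact h1.2⟩
  have e2 : y i = ⌊z i⌋ := by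
    symm; rw [Int.floor_eq_iff]; exact ⟨h2.1, by push_cast; exact h2.2⟩
  rw [e1, e2]

lemma lattice_finite {S : Set (Fin 2 → ℝ)} (hS : Bornology.IsBounded S) :
    {x : Fin 2 → ℤ | icast x ∈ S}.Finite := by
  obtain ⟨R, hR⟩ := hS.subset_closedBall 0
  apply Set.Finite.subset (Finset.finite_toSet
    (Finset.Icc (fun _ : Fin 2 => -⌈R⌉) fun _ => ⌈R⌉))
  intro x hx
  have hn : ‖icast x‖ ≤ R := by
    simpa [dist_zero_right] using hR hx
  simp only [Finset.coe_Icc, Set.mem_Icc]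
  constructor <;> intro i
  · have := (abs_le.1 ((norm_le_pi_norm (icast x) i).trans hn)).1
    have h2 : -(⌈R⌉ : ℝ) ≤ (x i : ℝ) := le_trans (neg_le_neg (Int.le_ceil R)) this
    exact_mod_cast h2
  · have := (abs_le.1 ((norm_le_pi_norm (icast x) i).trans hn)).2
    have h2 : (x i : ℝ) ≤ (⌈R⌉ : ℝ) := this.trans (Int.le_ceil R)
    exact_mod_cast h2

lemma volume_eq_of_count (P : Set (Fin 2 → ℝ)) (W : Set (Fin 2 → ℝ)) (hW : W.Finite)
    (hPV : P = convexHull ℝ W)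
    (h0 : (0 : Fin 2 → ℝ) ∈ interior P) (A : ℝ)
    (hcount : ∀ m : ℕ, (({x : Fin 2 → ℤ | icast x ∈ (m:ℝ) • P}).ncard : ℝ)
      = A*(m:ℝ)^2 + A*(m:ℝ) + 1) :
    (volume P).toReal = A ∧ 0 < (volume P).toReal := by
  have hconv : Convex ℝ P := hPV ▸ convex_convexHull ℝ W
  have hcomp : IsCompact P := hPV ▸ hW.isCompact_convexHull (𝕜 := ℝ)
  have hfin : volume P ≠ ⊤ := hcomp.measure_lt_top.ne
  obtain ⟨ε, hε, hb⟩ := Metric.mem_nhds_iff.1 (mem_interior_iff_mem_nhds.1 h0)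
  have hr0 : 0 < ε/2 := by positivity
  have hball : Metric.closedBall (0 : Fin 2 → ℝ) (ε/2) ⊆ P :=
    (Metric.closedBall_subset_ball (by linarith)).trans hb
  set c := 1/(ε/2) with hcdef
  have hc : 0 < c := by positivity
  have hcP : Metric.closedBall (0 : Fin 2 → ℝ) 1 ⊆ c • P := by
    intro y hy
    refine ⟨(ε/2) • y, hball ?_, ?_⟩
    · rw [Metric.mem_closedBall, dist_zero_right] at hy ⊢
      rw [norm_smul, Real.norm_eq_abs, abs_of_pos hr0]
      calc (ε/2) * ‖y‖ ≤ (ε/2) * 1 := mul_le_mul_of_nonneg_left hy hr0.le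
      _ = ε/2 := mul_one _
    · show c • ((ε/2) • y) = y
      rw [smul_smul, hcdef]
      field_simp
      exact one_smul ℝ y
  have hVpos : 0 < (volume P).toReal := by
    refine ENNReal.toReal_pos ?_ hfin
    exact (lt_of_lt_of_le (Metric.measure_ball_pos volume 0 hε) (measure_mono hb)).ne'
  set T : ℕ → Set (Fin 2 → ℤ) := fun m => {x | icast x ∈ (m:ℝ) • P} with hTdef
  have hTfin : ∀ m : ℕ, (T m).Finite := fun m =>
    lattice_finite (hcomp.isBounded.smul₀ (m:ℝ))
  have hunion : ∀ m : ℕ, volume (⋃ x ∈ (hTfin m).toFinset, cube x) = ((T m).ncard : ℝ≥0∞) := by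
    intro m
    rw [measure_biUnion_finset (fun x _ y _ hxy => cube_disjoint hxy)
      (fun x _ => measurableSet_cube x)]
    simp [volume_cube, Set.ncard_eq_toFinset_card _ (hTfin m)]
  have upper : ∀ m : ℕ, ((T m).ncard : ℝ≥0∞) ≤ volume (((m:ℝ)+c) • P) := by
    intro m
    rw [← hunion m]
    apply measure_mono
    intro z hz
    simp only [Set.mem_iUnion] at hz
    obtain ⟨x, hx, hzx⟩ := hz
    have hxm : icast x ∈ (m:ℝ) • P := (hTfin m).mem_toFinset.1 hx
    have hz1 : z - icast x ∈ c • P := by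
      apply hcP
      rw [Metric.mem_closedBall, dist_zero_right]
      refine (pi_norm_le_iff_of_nonneg zero_le_one).2 fun i => ?_
      have h := mem_cube.1 hzx i
      rw [Pi.sub_apply, Real.norm_eq_abs, abs_le]
      constructor
      · have := h.1; simp only [icast]; linarith
      · have := h.2; simp only [icast]; linarith
    have hmem : z ∈ (m:ℝ) • P + c • P := by
      have := Set.add_mem_add hxm hz1
      simpa using this
    rwa [← hconv.add_smul (by positivity) hc.le] at hmem
  have lower : ∀ m : ℕ, c ≤ (m:ℝ) → volume (((m:ℝ)-c) • P) ≤ ((T m).ncard : ℝ≥0∞) := by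
    intro m hm
    rw [← hunion m]
    apply measure_mono
    intro y hy
    have h1 : icast (fun i => ⌊y i⌋) - y ∈ c • P := by
      apply hcP
      rw [Metric.mem_closedBall, dist_zero_right]
      refine (pi_norm_le_iff_of_nonneg zero_le_one).2 fun i => ?_
      rw [Pi.sub_apply, Real.norm_eq_abs, abs_le]
      simp only [icast]
      constructor
      · linarith [Int.lt_floor_add_one (y i)]
      · linarith [Int.floor_le (y i)]
    have hfl : (fun i => ⌊y i⌋) ∈ T m := by
      have hmem : icast (fun i => ⌊y i⌋) ∈ ((m:ℝ)-c) • P + c • P := by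
        have := Set.add_mem_add hy h1
        simpa using this
      rwa [← hconv.add_smul (by linarith) hc.le, sub_add_cancel] at hmem
    refine Set.mem_iUnion.2 ⟨fun i => ⌊y i⌋, Set.mem_iUnion.2
      ⟨(hTfin m).mem_toFinset.2 hfl, ?_⟩⟩
    exact mem_cube.2 fun i => ⟨Int.floor_le (y i), Int.lt_floor_add_one (y i)⟩
  set V := (volume P).toReal with hVdef
  have hsmulvol : ∀ s : ℝ, 0 ≤ s → (volume (s • P)).toReal = s^2 * V := by
    intro s hs
    rw [Measure.addHaar_smul_of_nonneg volume hs P, ENNReal.toReal_mul,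
      ENNReal.toReal_ofReal (by positivity)]
    norm_num
    exact Or.inl hVdef.symm
  have upperR : ∀ m : ℕ, ((T m).ncard : ℝ) ≤ ((m:ℝ)+c)^2 * V := by
    intro m
    have hne : volume (((m:ℝ)+c) • P) ≠ ⊤ := by
      rw [Measure.addHaar_smul_of_nonneg volume (by positivity : (0:ℝ) ≤ (m:ℝ)+c) P]
      exact ENNReal.mul_ne_top ENNReal.ofReal_ne_top hfin
    have h2 := ENNReal.toReal_mono hne (upper m)
    rwa [ENNReal.toReal_natCast, hsmulvol _ (by positivity)] at h2
  have lowerR : ∀ m : ℕ, c ≤ (m:ℝ) → ((m:ℝ)-c)^2 * V ≤ ((T m).ncard : ℝ) := by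
    intro m hm
    have h2 := ENNReal.toReal_mono (by simp : ((T m).ncard : ℝ≥0∞) ≠ ⊤) (lower m hm)
    rwa [ENNReal.toReal_natCast, hsmulvol _ (by linarith)] at h2
  -- limits
  set f : ℕ → ℝ := fun m => ((T m).ncard : ℝ) / (m:ℝ)^2 with hfdef
  have hcdiv : Tendsto (fun m : ℕ => c/(m:ℝ)) atTop (nhds 0) :=
    tendsto_const_div_atTop_nhds_zero_nat c
  have hg1 : Tendsto (fun m : ℕ => (1 - c/(m:ℝ))^2 * V) atTop (nhds V) := by
    have := ((hcdiv.const_sub 1).pow 2).mul_const V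
    simpa using this
  have hg2 : Tendsto (fun m : ℕ => (1 + c/(m:ℝ))^2 * V) atTop (nhds V) := by
    have := ((hcdiv.const_add 1).pow 2).mul_const V
    simpa using this
  have hfV : Tendsto f atTop (nhds V) := by
    apply tendsto_of_tendsto_of_tendsto_of_le_of_le' hg1 hg2
    · filter_upwards [eventually_ge_atTop (⌈c⌉₊ + 1)] with m hm
      have hm1 : (1:ℝ) ≤ (m:ℝ) := by exact_mod_cast Nat.one_le_iff_ne_zero.2 (by omega)
      have hmc : c ≤ (m:ℝ) := (Nat.le_ceil c).trans
        (by exact_mod_cast Nat.le_of_succ_le hm)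
      have hm0 : (0:ℝ) < (m:ℝ)^2 := by positivity
      have he : (1 - c/(m:ℝ))^2 * V = ((m:ℝ)-c)^2 * V / (m:ℝ)^2 := by
        field_simp
      rw [he]
      show _ ≤ ((T m).ncard : ℝ)/(m:ℝ)^2
      gcongr
      exact lowerR m hmc
    · filter_upwards [eventually_ge_atTop 1] with m hm
      have hm1 : (1:ℝ) ≤ (m:ℝ) := by exact_mod_cast hm
      have hm0 : (0:ℝ) < (m:ℝ)^2 := by positivity
      have he : (1 + c/(m:ℝ))^2 * V = ((m:ℝ)+c)^2 * V / (m:ℝ)^2 := by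
        field_simp
      rw [he]
      show ((T m).ncard : ℝ)/(m:ℝ)^2 ≤ _
      gcongr
      exact upperR m
  have hfA : Tendsto f atTop (nhds A) := by
    have key : ∀ᶠ m : ℕ in atTop, f m = A + A/(m:ℝ) + (1/(m:ℝ))*(1/(m:ℝ)) := by
      filter_upwards [eventually_ge_atTop 1] with m hm
      have hm1 : (1:ℝ) ≤ (m:ℝ) := by exact_mod_cast hm
      have hm0 : (m:ℝ) ≠ 0 := by linarith
      show ((T m).ncard : ℝ)/(m:ℝ)^2 = _
      rw [hTdef]
      rw [hcount m]
      field_simp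
    have h2 : Tendsto (fun m : ℕ => A + A/(m:ℝ) + (1/(m:ℝ))*(1/(m:ℝ))) atTop (nhds A) := by
      have := ((tendsto_const_div_atTop_nhds_zero_nat A).const_add A).add
        ((tendsto_const_div_atTop_nhds_zero_nat 1).mul (tendsto_const_div_atTop_nhds_zero_nat 1))
      simpa using this
    exact Tendsto.congr' (key.mono fun _ h => h.symm) h2
  exact ⟨tendsto_nhds_unique hfV hfA, hVpos⟩

theorem statement4 (P : Set (Fin 2 → ℝ)) (L : Polynomial ℚ) (δ1 : ℤ)
    (hP : IsLatticePolytope 2 P) (hdim : IsFullDim 2 P) (href : IsReflexive 2 P)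
    (hL : IsEhrhart 2 P L) (hδ : HasDeltaVector 2 L ![1, δ1, 1]) :
    ((∃ b : ℝ, cRoots L = {(-(1/2) : ℂ) + b * Complex.I, (-(1/2) : ℂ) - b * Complex.I}) ∨
      (∃ a : ℝ, cRoots L = {(a : ℂ), ((-1 - a : ℝ) : ℂ)})) ∧
    (IsCL L ↔ δ1 ≤ 6) ∧ (IsCL L ↔ vol 2 P ≤ 4) ∧ (IsCL L ↔ (latticePts 2 P).ncard ≤ 9) ∧
    (IsRealRooted L ↔ 6 ≤ δ1) ∧ (IsRealRooted L ↔ 4 ≤ vol 2 P) ∧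
    (IsRealRooted L ↔ 9 ≤ (latticePts 2 P).ncard) ∧
    (IsRealRooted L → ∀ z ∈ cRoots L, -1 < z.re ∧ z.re < 0) := by
  classical
  obtain ⟨Vfin, hPV⟩ := hP
  have hLex : L = C (((δ1:ℚ)+2)/2) * (X^2 + X) + 1 := L_explicit L δ1 hδ
  -- counting formula
  have hcount : ∀ m : ℕ, (({x : Fin 2 → ℤ | icast x ∈ (m:ℝ) • P}).ncard : ℝ)
      = (((δ1:ℝ)+2)/2)*(m:ℝ)^2 + (((δ1:ℝ)+2)/2)*(m:ℝ) + 1 := by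
    intro m
    have h1 := (hL m).symm
    rw [hLex] at h1
    simp only [eval_add, eval_mul, eval_C, eval_pow, eval_X, eval_one] at h1
    have h3 : (({x : Fin 2 → ℤ | icast x ∈ (m:ℝ) • P}).ncard : ℚ)
        = (((δ1:ℚ)+2)/2)*(m:ℚ)^2 + (((δ1:ℚ)+2)/2)*(m:ℚ) + 1 := by
      show ((latticePts 2 ((m:ℝ) • P)).ncard : ℚ) = _
      rw [h1]; ring
    have h4 := congrArg (fun q : ℚ => (q : ℝ)) h3
    push_cast at h4 ⊢
    convert h4 using 2
  have hWfin : ((fun v : Fin 2 → ℤ => fun i => (v i : ℝ)) '' (Vfin : Set (Fin 2 → ℤ))).Finite :=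
    Vfin.finite_toSet.image _
  have hvol := volume_eq_of_count P _ hWfin hPV href.1 (((δ1:ℝ)+2)/2) hcount
  have hvol2 : vol 2 P = ((δ1:ℝ)+2)/2 := hvol.1
  have hApos : (0:ℝ) < ((δ1:ℝ)+2)/2 := hvol.1 ▸ hvol.2
  have hd1 : -1 ≤ δ1 := by
    have h1 : (-2:ℝ) < (δ1:ℝ) := by linarith
    have h2 : (-2:ℤ) < δ1 := by exact_mod_cast h1
    omega
  have hAq : (0:ℚ) < ((δ1:ℚ)+2)/2 := by
    have : (0:ℚ) < (δ1:ℚ)+2 := by exact_mod_cast (by omega : (0:ℤ) < δ1+2)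
    linarith
  have hAne : ((((δ1:ℚ)+2)/2 : ℚ)) ≠ 0 := ne_of_gt hAq
  -- lattice point count of P itself
  have hcard : ((latticePts 2 P).ncard : ℤ) = δ1 + 3 := by
    have h1 := hL 1
    rw [hLex] at h1
    simp only [eval_add, eval_mul, eval_C, eval_pow, eval_X, eval_one, Nat.cast_one,
      Nat.cast_ofNat] at h1
    rw [one_smul] at h1
    have h2 : ((latticePts 2 P).ncard : ℚ) = (δ1:ℚ) + 3 := by
      rw [← h1]; ring
    exact_mod_cast h2
  have hv1 : vol 2 P ≤ 4 ↔ δ1 ≤ 6 := by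
    rw [hvol2]
    constructor
    · intro h
      have h1 : (δ1:ℝ) ≤ 6 := by linarith
      exact_mod_cast h1
    · intro h
      have h1 : (δ1:ℝ) ≤ 6 := by exact_mod_cast h
      linarith
  have hv2 : 4 ≤ vol 2 P ↔ 6 ≤ δ1 := by
    rw [hvol2]
    constructor
    · intro h
      have h1 : (6:ℝ) ≤ (δ1:ℝ) := by linarith
      exact_mod_cast h1
    · intro h
      have h1 : (6:ℝ) ≤ (δ1:ℝ) := by exact_mod_cast h
      linarith
  have hn1 : (latticePts 2 P).ncard ≤ 9 ↔ δ1 ≤ 6 := by omega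
  have hn2 : 9 ≤ (latticePts 2 P).ncard ↔ 6 ≤ δ1 := by omega
  rcases le_or_gt δ1 6 with h6 | h7
  · -- CL case
    have hA4 : ((δ1:ℝ)+2)/2 ≤ 4 := by
      have : (δ1:ℝ) ≤ 6 := by exact_mod_cast h6
      linarith
    have hble : (0:ℝ) ≤ 1/(((δ1:ℝ)+2)/2) - 1/4 := by
      have := one_div_le_one_div_of_le hApos hA4
      linarith
    set b := Real.sqrt (1/(((δ1:ℝ)+2)/2) - 1/4) with hbdef
    have hb2 : b^2 = 1/(((δ1:ℝ)+2)/2) - 1/4 := Real.sq_sqrt hble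
    have hb0 : 0 ≤ b := Real.sqrt_nonneg _
    have hsum : ((-(1/2):ℂ) + b*Complex.I) + ((-(1/2):ℂ) - b*Complex.I) = -1 := by ring
    have hneR : ((δ1:ℝ)+2)/2 ≠ 0 := ne_of_gt hApos
    have h00 : ((δ1:ℝ)+2) ≠ 0 := by linarith
    have hprodR : (((δ1:ℝ)+2)/2) * (1/4 + b^2) = 1 := by
      rw [hb2]
      field_simp
      ring
    have hzz : ((-(1/2):ℂ) + b*Complex.I) * ((-(1/2):ℂ) - b*Complex.I)
        = ((1/4 + b^2 : ℝ):ℂ) := by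
      push_cast
      linear_combination (-((b:ℂ)^2)) * Complex.I_sq
    have hprod : ((((δ1:ℚ)+2)/2 : ℚ):ℂ)
        * (((-(1/2):ℂ) + b*Complex.I) * ((-(1/2):ℂ) - b*Complex.I)) = 1 := by
      rw [hzz, show ((((δ1:ℚ)+2)/2 : ℚ):ℂ) = ((((δ1:ℝ)+2)/2 : ℝ):ℂ) by push_cast; ring,
        ← Complex.ofReal_mul, hprodR, Complex.ofReal_one]
    have hroots : cRoots L = {(-(1/2):ℂ) + b*Complex.I, (-(1/2):ℂ) - b*Complex.I} := by
      rw [hLex]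
      exact roots_pair _ hAne _ _ hsum hprod
    have hmem : ∀ z ∈ cRoots L, z = (-(1/2):ℂ) + b*Complex.I ∨ z = (-(1/2):ℂ) - b*Complex.I := by
      intro z hz
      rw [hroots] at hz
      simpa using hz
    have hre1 : ((-(1/2):ℂ) + (b:ℂ)*Complex.I).re = -(1/2) := by simp
    have hre2 : ((-(1/2):ℂ) - (b:ℂ)*Complex.I).re = -(1/2) := by simp
    have him1 : ((-(1/2):ℂ) + (b:ℂ)*Complex.I).im = b := by simp
    have him2 : ((-(1/2):ℂ) - (b:ℂ)*Complex.I).im = -b := by simp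
    have hCL : IsCL L := by
      intro z hz
      rcases hmem z hz with rfl | rfl
      · exact hre1
      · exact hre2
    have hb06 : 6 ≤ δ1 → b = 0 := by
      intro h
      have h66 : δ1 = 6 := le_antisymm h6 h
      rw [hbdef]
      have : 1/(((δ1:ℝ)+2)/2) - 1/4 = 0 := by
        subst h66; norm_num
      rw [this, Real.sqrt_zero]
    have hbpos : δ1 ≤ 5 → 0 < b := by
      intro h
      apply Real.sqrt_pos.2
      have hlt : ((δ1:ℝ)+2)/2 < 4 := by
        have : (δ1:ℝ) ≤ 5 := by exact_mod_cast h
        linarith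
      have := one_div_lt_one_div_of_lt hApos hlt
      linarith
    have hRRiff : IsRealRooted L ↔ 6 ≤ δ1 := by
      constructor
      · intro h
        by_contra h7
        have hb := hbpos (by omega)
        have := h ((-(1/2):ℂ) + b*Complex.I) (by rw [hroots]; exact Multiset.mem_cons_self _ _)
        rw [him1] at this
        linarith
      · intro h
        intro z hz
        have hb := hb06 h
        rcases hmem z hz with rfl | rfl
        · rw [him1, hb]
        · rw [him2, hb]; ring
    refine ⟨Or.inl ⟨b, hroots⟩, iff_of_true hCL h6, (iff_of_true hCL h6).trans hv1.symm,
      (iff_of_true hCL h6).trans hn1.symm, hRRiff, hRRiff.trans hv2.symm, hRRiff.trans hn2.symm, ?_⟩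
    intro hR z hz
    have hb := hb06 (hRRiff.1 hR)
    rcases hmem z hz with rfl | rfl
    · rw [hre1]; norm_num
    · rw [hre2]; norm_num
  · -- real case
    have h7' : 7 ≤ δ1 := by omega
    have hgt : (4:ℝ) < ((δ1:ℝ)+2)/2 := by
      have : (7:ℝ) ≤ (δ1:ℝ) := by exact_mod_cast h7'
      linarith
    have htle : (0:ℝ) < 1/4 - 1/(((δ1:ℝ)+2)/2) := by
      have := one_div_lt_one_div_of_lt (by norm_num : (0:ℝ) < 4) hgt
      linarith
    set t := Real.sqrt (1/4 - 1/(((δ1:ℝ)+2)/2)) with htdef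
    have ht2 : t^2 = 1/4 - 1/(((δ1:ℝ)+2)/2) := Real.sq_sqrt htle.le
    have htpos : 0 < t := Real.sqrt_pos.2 htle
    have htlt : t < 1/2 := by
      have h1 : 1/(((δ1:ℝ)+2)/2) > 0 := by positivity
      nlinarith
    set a := -(1/2) + t with hadef
    have hsum : ((a:ℝ):ℂ) + (((-1 - a : ℝ)):ℂ) = -1 := by push_cast; ring
    have hneR : ((δ1:ℝ)+2)/2 ≠ 0 := ne_of_gt hApos
    have h00 : ((δ1:ℝ)+2) ≠ 0 := by linarith
    have hprodR : (((δ1:ℝ)+2)/2) * (a * (-1 - a)) = 1 := by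
      have h1 : a * (-1 - a) = 1/4 - t^2 := by rw [hadef]; ring
      rw [h1, ht2]
      field_simp
      ring
    have hprod : ((((δ1:ℚ)+2)/2 : ℚ):ℂ) * (((a:ℝ):ℂ) * (((-1 - a : ℝ)):ℂ)) = 1 := by
      rw [show ((((δ1:ℚ)+2)/2 : ℚ):ℂ) = ((((δ1:ℝ)+2)/2 : ℝ):ℂ) by push_cast; ring,
        ← Complex.ofReal_mul, ← Complex.ofReal_mul, hprodR, Complex.ofReal_one]
    have hroots : cRoots L = {((a:ℝ):ℂ), (((-1 - a : ℝ)):ℂ)} := by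
      rw [hLex]
      exact roots_pair _ hAne _ _ hsum hprod
    have hmem : ∀ z ∈ cRoots L, z = ((a:ℝ):ℂ) ∨ z = (((-1 - a : ℝ)):ℂ) := by
      intro z hz
      rw [hroots] at hz
      simpa using hz
    have hRR : IsRealRooted L := by
      intro z hz
      rcases hmem z hz with rfl | rfl <;> simp
    have hnotCL : ¬ IsCL L := by
      intro h
      have h1 := h _ (by rw [hroots]; exact Multiset.mem_cons_self _ _)
      rw [Complex.ofReal_re] at h1
      rw [hadef] at h1
      linarith
    refine ⟨Or.inr ⟨a, hroots⟩, iff_of_false hnotCL (by omega),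
      (iff_of_false hnotCL (by omega)).trans hv1.symm,
      (iff_of_false hnotCL (by omega)).trans hn1.symm,
      iff_of_true hRR h7.le, (iff_of_true hRR h7.le).trans hv2.symm,
      (iff_of_true hRR h7.le).trans hn2.symm, ?_⟩
    intro _ z hz
    rcases hmem z hz with rfl | rfl
    · rw [Complex.ofReal_re, hadef]
      constructor <;> linarith
    · rw [Complex.ofReal_re, hadef]
      constructor <;> linarith
end
end

section
/- Let P ⊂ ℝ⁴ be a 4-dimensional reflexive polytope with δ-vector (1, δ_1, δ_2, δ_1, 1). Then P is a CL-polytope if and only if either (i) δ_1 = 76 and δ_2 = 230, or (ii) 5δ_2 < 14δ_1 + 86, 10δ_1 ≤ 3δ_2 + 70, and 17(δ_1 + 4δ_2 − 15)² ≤ (17δ_1 + 49)² + (17δ_2 − 94)². In particular, if P is a CL-polytope then δ_1 ≤ 76 and δ_2 ≤ 230. -/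
open Pointwise MeasureTheory Polynomial

noncomputable section

-- auxiliary lemmas

lemma choose4_q (n : ℕ) : ((n.choose 4 : ℚ)) * 24 = (n:ℚ)*((n:ℚ)-1)*((n:ℚ)-2)*((n:ℚ)-3) := by
  rcases Nat.lt_or_ge n 3 with h | h
  · interval_cases n <;> norm_num [Nat.choose]
  · obtain ⟨k, rfl⟩ := Nat.exists_eq_add_of_le h
    have hd : (3+k).descFactorial 4 = k*(k+1)*(k+2)*(k+3) := by
      rw [Nat.descFactorial_succ, Nat.descFactorial_succ, Nat.descFactorial_succ,
        Nat.descFactorial_succ, Nat.descFactorial_zero]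
      have e1 : 3+k-3 = k := by omega
      have e2 : 3+k-2 = k+1 := by omega
      have e3 : 3+k-1 = k+2 := by omega
      have e4 : 3+k-0 = k+3 := by omega
      rw [e1, e2, e3, e4]; ring
    have hf := Nat.descFactorial_eq_factorial_mul_choose (3+k) 4
    rw [hd] at hf
    have hf4 : k*(k+1)*(k+2)*(k+3) = 24 * (3+k).choose 4 := by
      rw [hf]; norm_num [Nat.factorial]
    have hq : (k:ℚ)*((k:ℚ)+1)*((k:ℚ)+2)*((k:ℚ)+3) = 24 * ((3+k).choose 4 : ℚ) := by
      exact_mod_cast congrArg (Nat.cast : ℕ → ℚ) hf4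
    push_cast
    push_cast at hq
    linarith

lemma complex_quad_re_im (a b c : ℝ) (v : ℂ)
    (h : (a:ℂ)*v^2 + (b:ℂ)*v + (c:ℂ) = 0) :
    a*(v.re^2 - v.im^2) + b*v.re + c = 0 ∧ a*(2*v.re*v.im) + b*v.im = 0 := by
  have h1 := congrArg Complex.re h
  have h2 := congrArg Complex.im h
  simp [pow_two, Complex.add_re, Complex.add_im, Complex.mul_re, Complex.mul_im,
    Complex.ofReal_re, Complex.ofReal_im] at h1 h2
  constructor <;> nlinarith [h1, h2]

lemma complex_quad_of_re_im (a b c x y : ℝ)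
    (h1 : a*(x^2 - y^2) + b*x + c = 0) (h2 : a*(2*x*y) + b*y = 0) :
    (a:ℂ)*((x:ℂ) + (y:ℂ)*Complex.I)^2 + (b:ℂ)*((x:ℂ) + (y:ℂ)*Complex.I) + (c:ℂ) = 0 := by
  have e1 : ((a*(x^2 - y^2) + b*x + c : ℝ) : ℂ) = 0 := by rw [h1]; norm_num
  have e2 : ((a*(2*x*y) + b*y : ℝ) : ℂ) = 0 := by rw [h2]; norm_num
  push_cast at e1 e2
  linear_combination e1 + Complex.I * e2 + ((a:ℂ)*(y:ℂ)^2) * Complex.I_sq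

lemma quad_forward (a b c : ℝ) (ha : 0 < a)
    (K : ∀ x y : ℝ, a*(x^2-y^2)+b*x+c = 0 → a*(2*x*y)+b*y = 0 → (y = 0 ∧ x ≤ 0)) :
    0 ≤ b ∧ 0 ≤ c ∧ 4*a*c ≤ b^2 := by
  have hdisc : 4*a*c ≤ b^2 := by
    by_contra hlt
    push_neg at hlt
    have hD0 : 0 < 4*a*c - b^2 := by linarith
    have hsq : Real.sqrt (4*a*c-b^2) ^ 2 = 4*a*c-b^2 := Real.sq_sqrt hD0.le
    have hy : Real.sqrt (4*a*c-b^2) / (2*a) > 0 := by positivity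
    have h1 : a*((-b/(2*a))^2-(Real.sqrt (4*a*c-b^2) / (2*a))^2)+b*(-b/(2*a))+c = 0 := by
      field_simp
      linarith [hsq, Real.sq_sqrt (show (0:ℝ) ≤ a*4*c-b^2 by linarith)]
    have h2 : a*(2*(-b/(2*a))*(Real.sqrt (4*a*c-b^2) / (2*a)))+b*(Real.sqrt (4*a*c-b^2) / (2*a)) = 0 := by
      field_simp
      ring
    have := (K _ _ h1 h2).1
    linarith
  set s : ℝ := Real.sqrt (b^2 - 4*a*c) with hs
  have hs2 : s^2 = b^2 - 4*a*c := Real.sq_sqrt (by linarith)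
  have hs0 : 0 ≤ s := Real.sqrt_nonneg _
  have h1 : a*(((-b+s)/(2*a))^2-(0:ℝ)^2)+b*((-b+s)/(2*a))+c = 0 := by
    field_simp
    linear_combination hs2
  have h2 : a*(2*((-b+s)/(2*a))*(0:ℝ))+b*(0:ℝ) = 0 := by ring
  have hx := (K _ _ h1 h2).2
  have hbs : s ≤ b := by
    by_contra hcon
    push_neg at hcon
    have : 0 < (-b+s)/(2*a) := by apply div_pos; linarith; linarith
    linarith
  refine ⟨by linarith, ?_, hdisc⟩
  nlinarith [hs2, hbs, hs0]

lemma quad_reverse (a b c : ℝ) (ha : 0 < a) (hb : 0 ≤ b) (hc : 0 ≤ c) (hd : 4*a*c ≤ b^2)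
    (x y : ℝ) (h1 : a*(x^2-y^2)+b*x+c = 0) (h2 : a*(2*x*y)+b*y = 0) :
    y = 0 ∧ x ≤ 0 := by
  have hy : y = 0 := by
    by_contra hy0
    have hxb : 2*a*x + b = 0 := by
      have h3 : y * (2*a*x + b) = 0 := by linarith [h2]
      rcases mul_eq_zero.mp h3 with h | h
      · exact absurd h hy0
      · exact h
    have hb2 : b^2 = 4*a^2*x^2 := by linear_combination (b - 2*a*x) * hxb
    have e : -(a*x^2) - a*y^2 + c = 0 := by linear_combination h1 - x*hxb
    have hy2 : 0 < y^2 := by rcases lt_or_gt_of_ne hy0 with h|h <;> nlinarith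
    nlinarith [mul_pos ha hy2]
  subst hy
  refine ⟨rfl, ?_⟩
  by_contra hx
  push_neg at hx
  nlinarith [mul_pos ha (pow_pos hx 2), mul_nonneg hb hx.le]

lemma re_neg_half (z : ℂ) (him : ((2*z+1)^2).im = 0) (hre : ((2*z+1)^2).re ≤ 0) :
    z.re = -(1/2 : ℝ) := by
  have hwre : (2*z+1).re = 2*z.re+1 := by
    simp [Complex.add_re, Complex.mul_re]
  have hwim : (2*z+1).im = 2*z.im := by
    simp [Complex.add_im, Complex.mul_im]
  have h1 : ((2*z+1)^2).im = 2*(2*z.re+1)*(2*z.im) := by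
    rw [pow_two, Complex.mul_im, hwre, hwim]; ring
  have h2 : ((2*z+1)^2).re = (2*z.re+1)^2 - (2*z.im)^2 := by
    rw [pow_two, Complex.mul_re, hwre, hwim]; ring
  rw [h1] at him
  rw [h2] at hre
  rcases eq_or_ne (2*z.re+1) 0 with h | h
  · linarith
  · have hz : 2*z.im = 0 := by
      rcases mul_eq_zero.mp him with h' | h'
      · rcases mul_eq_zero.mp h' with h'' | h''
        · norm_num at h''
        · exact absurd h'' h
      · exact h'
    rw [hz] at hre
    have : (2*z.re+1)^2 > 0 := by positivity
    linarith

lemma root_iff (L : Polynomial ℚ) (a b c : ℤ)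
    (hev : ∀ m : ℕ, 384 * L.eval (m:ℚ) =
      (a:ℚ) * (2*(m:ℚ)+1)^4 + (b:ℚ) * (2*(m:ℚ)+1)^2 + (c:ℚ))
    (hL0 : L.eval 0 = 1) :
    ∀ z : ℂ, (z ∈ (L.map (algebraMap ℚ ℂ)).roots ↔
      (a:ℂ) * ((2*z+1)^2)^2 + (b:ℂ) * (2*z+1)^2 + (c:ℂ) = 0) := by
  set M : Polynomial ℚ := Polynomial.C ((384:ℚ)⁻¹) *
      (Polynomial.C (a:ℚ) * (2*X+Polynomial.C 1)^4 + Polynomial.C (b:ℚ) * (2*X+Polynomial.C 1)^2 + Polynomial.C (c:ℚ))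
    with hM
  have hLM : L = M := by
    have hsub : L - M = 0 := by
      apply Polynomial.eq_zero_of_infinite_isRoot
      apply Set.infinite_of_injective_forall_mem
        (f := fun n : ℕ => (n : ℚ)) (Nat.cast_injective)
      intro n
      simp only [Set.mem_setOf_eq, IsRoot, eval_sub, hM, eval_mul, eval_add, eval_C, eval_pow,
        eval_ofNat, eval_X, eval_one]
      have := hev n
      push_cast at this ⊢
      linarith
    exact sub_eq_zero.mp hsub
  have hLne : L ≠ 0 := fun h => by simp [h] at hL0
  have hmapne : L.map (algebraMap ℚ ℂ) ≠ 0 := Polynomial.map_ne_zero hLne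
  have hmap : L.map (algebraMap ℚ ℂ) = Polynomial.C ((384:ℂ)⁻¹) *
      (Polynomial.C (a:ℂ) * (2*X+Polynomial.C 1)^4 + Polynomial.C (b:ℂ) * (2*X+Polynomial.C 1)^2 + Polynomial.C (c:ℂ)) := by
    rw [hLM, hM]
    simp only [Polynomial.map_mul, Polynomial.map_add, Polynomial.map_pow, Polynomial.map_C,
      Polynomial.map_X, Polynomial.map_ofNat, map_one]
    norm_num
  intro z
  rw [Polynomial.mem_roots hmapne, Polynomial.IsRoot, hmap]
  simp only [eval_mul, eval_add, eval_C, eval_pow, eval_ofNat, eval_X]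
  constructor
  · intro h
    have h384 : ((384:ℂ))⁻¹ ≠ 0 := by norm_num
    have := (mul_eq_zero.mp h).resolve_left h384
    linear_combination this
  · intro h
    rw [mul_eq_zero]
    right
    linear_combination h

lemma aZ_pos (P : Set (Fin 4 → ℝ)) (hP : IsLatticePolytope 4 P)
    (h0 : (0 : Fin 4 → ℝ) ∈ interior P)
    (L : Polynomial ℚ) (hL : IsEhrhart 4 P L) (a b c : ℤ)
    (hev : ∀ m : ℕ, 384 * L.eval (m:ℚ) =
      (a:ℚ) * (2*(m:ℚ)+1)^4 + (b:ℚ) * (2*(m:ℚ)+1)^2 + (c:ℚ)) : 0 < a := by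
  by_contra hacontra
  push_neg at hacontra
  obtain ⟨V, hV⟩ := hP
  have hcpt : IsCompact P := by
    rw [hV]
    exact (V.finite_toSet.image _).isCompact_convexHull ℝ
  obtain ⟨R, hR⟩ := isBounded_iff_forall_norm_le.mp hcpt.isBounded
  obtain ⟨ε, hε, hball⟩ := Metric.isOpen_iff.mp isOpen_interior 0 h0
  set N : ℕ := ⌈ε⁻¹⌉₊ + 1 with hN
  have hNpos : 0 < (N:ℝ) := by positivity
  have hNinv : (N:ℝ)⁻¹ < ε := by
    have h1 : ε⁻¹ < (N:ℝ) := by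
      calc ε⁻¹ ≤ (⌈ε⁻¹⌉₊ : ℝ) := Nat.le_ceil _
      _ < (N:ℝ) := by rw [hN]; push_cast; linarith
    calc (N:ℝ)⁻¹ < (ε⁻¹)⁻¹ := by
          apply inv_strictAnti₀ (by positivity) h1
    _ = ε := inv_inv ε
  set t : ℕ := 9 * N^2 * (b.natAbs + c.natAbs + 1) with ht
  have htpos : 0 < t := by positivity
  set m : ℕ := N * t with hm
  have hmpos : 0 < m := by positivity
  have hmR : (0:ℝ) ≤ (m:ℝ) := by positivity
  have hsub : (↑(Fintype.piFinset fun _ : Fin 4 => Finset.Icc (0:ℤ) ((t:ℤ)-1)) :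
      Set (Fin 4 → ℤ)) ⊆ latticePts 4 ((m:ℝ) • P) := by
    intro x hx
    simp only [Finset.coe_sort_coe, Finset.mem_coe, Fintype.mem_piFinset, Finset.mem_Icc] at hx
    show (fun i => (x i : ℝ)) ∈ (m:ℝ) • P
    rw [Set.mem_smul_set_iff_inv_smul_mem₀ (by positivity : (m:ℝ) ≠ 0)]
    apply interior_subset
    apply hball
    rw [Metric.mem_ball, dist_zero_right]
    rw [pi_norm_lt_iff hε]
    intro i
    have hxi0 : (0:ℤ) ≤ x i := (hx i).1
    have hxit : (x i : ℝ) < t := by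
      have h := (hx i).2
      have h' : ((x i : ℤ) : ℝ) ≤ (t:ℝ) - 1 := by exact_mod_cast h
      linarith
    have hxi0' : (0:ℝ) ≤ (x i : ℝ) := by exact_mod_cast hxi0
    simp only [Pi.smul_apply, smul_eq_mul, Real.norm_eq_abs]
    rw [abs_of_nonneg (by positivity)]
    have hmt : (m:ℝ) = (N:ℝ) * t := by rw [hm]; push_cast; ring
    calc (m:ℝ)⁻¹ * (x i : ℝ) < (m:ℝ)⁻¹ * t := by
          apply mul_lt_mul_of_pos_left hxit (by positivity)
    _ = (N:ℝ)⁻¹ := by rw [hmt]; field_simp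
    _ < ε := hNinv
  have hfin : (latticePts 4 ((m:ℝ) • P)).Finite := by
    apply Set.Finite.subset
      (Finset.finite_toSet (Fintype.piFinset fun _ : Fin 4 =>
        Finset.Icc (-⌈(m:ℝ)*R⌉) ⌈(m:ℝ)*R⌉))
    intro x hx
    obtain ⟨p, hp, hpx⟩ := Set.mem_smul_set.mp hx
    simp only [Finset.coe_sort_coe, Finset.mem_coe, Fintype.mem_piFinset, Finset.mem_Icc]
    intro i
    have h1 : |(x i : ℝ)| ≤ (m:ℝ) * R := by
      have hxi : ((x i : ℝ)) = (m:ℝ) * p i := by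
        have := congrFun hpx i
        simpa [Pi.smul_apply, smul_eq_mul] using this.symm
      rw [hxi, abs_mul, abs_of_nonneg hmR]
      have hpi : |p i| ≤ R := by
        calc |p i| = ‖p i‖ := (Real.norm_eq_abs _).symm
        _ ≤ ‖p‖ := norm_le_pi_norm p i
        _ ≤ R := hR p hp
      exact mul_le_mul_of_nonneg_left hpi hmR
    have h2 : (m:ℝ)*R ≤ (⌈(m:ℝ)*R⌉ : ℝ) := Int.le_ceil _
    rw [abs_le] at h1
    constructor
    · exact_mod_cast (by linarith : -((⌈(m:ℝ)*R⌉:ℤ):ℝ) ≤ ((x i : ℤ):ℝ))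
    · exact_mod_cast (by linarith : ((x i : ℤ):ℝ) ≤ ((⌈(m:ℝ)*R⌉:ℤ):ℝ))
  have hcard : (t:ℚ)^4 ≤ ((latticePts 4 ((m:ℝ) • P)).ncard : ℚ) := by
    have h1 : (↑(Fintype.piFinset fun _ : Fin 4 => Finset.Icc (0:ℤ) ((t:ℤ)-1)) :
        Set (Fin 4 → ℤ)).ncard = t^4 := by
      rw [Set.ncard_coe_finset, Fintype.card_piFinset]
      simp [Int.card_Icc]
    have h2 := Set.ncard_le_ncard hsub hfin
    rw [h1] at h2
    exact_mod_cast h2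
  have hkey : (a:ℚ) * (2*(m:ℚ)+1)^4 + (b:ℚ) * (2*(m:ℚ)+1)^2 + (c:ℚ) ≥ 384 * (t:ℚ)^4 := by
    rw [← hev m, hL m]
    linarith
  clear hL hev hball hR hcpt hV hsub hfin hcard h0
  set β : ℚ := (b.natAbs : ℚ) with hβ
  set γ : ℚ := (c.natAbs : ℚ) with hγ
  have hb1 : (b:ℚ) ≤ β := by
    rw [hβ, Nat.cast_natAbs]; push_cast; exact le_abs_self _
  have hc1 : (c:ℚ) ≤ γ := by
    rw [hγ, Nat.cast_natAbs]; push_cast; exact le_abs_self _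
  have hβ0 : 0 ≤ β := by positivity
  have hγ0 : 0 ≤ γ := by positivity
  have hNq : (1:ℚ) ≤ (N:ℚ) := by exact_mod_cast Nat.one_le_iff_ne_zero.mpr (by omega)
  have htq : (t:ℚ) = 9 * (N:ℚ)^2 * (β + γ + 1) := by rw [ht]; push_cast; ring
  have hmq : (m:ℚ) = (N:ℚ) * (t:ℚ) := by rw [hm]; push_cast; ring
  clear_value N t m
  clear hN ht hm
  have haq : (a:ℚ) ≤ 0 := by exact_mod_cast hacontra
  have h4 : (0:ℚ) ≤ (2*(m:ℚ)+1)^4 := by positivity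
  have hA : (a:ℚ) * (2*(m:ℚ)+1)^4 ≤ 0 := mul_nonpos_of_nonpos_of_nonneg haq h4
  have htq1 : (1:ℚ) ≤ (t:ℚ) := by exact_mod_cast htpos
  have hsq : (2*(m:ℚ)+1)^2 ≤ 9*(N:ℚ)^2*(t:ℚ)^2 := by
    have h1 : 2*(m:ℚ)+1 ≤ 3*(N:ℚ)*(t:ℚ) := by
      rw [hmq]; nlinarith
    have h2 : (0:ℚ) ≤ 2*(m:ℚ)+1 := by positivity
    calc (2*(m:ℚ)+1)^2 ≤ (3*(N:ℚ)*(t:ℚ))^2 := by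
          exact pow_le_pow_left₀ h2 h1 2
    _ = 9*(N:ℚ)^2*(t:ℚ)^2 := by ring
  have h2sq : (0:ℚ) ≤ (2*(m:ℚ)+1)^2 := by positivity
  have hB : (b:ℚ) * (2*(m:ℚ)+1)^2 ≤ β * (9*(N:ℚ)^2*(t:ℚ)^2) := by
    calc (b:ℚ) * (2*(m:ℚ)+1)^2 ≤ β * (2*(m:ℚ)+1)^2 :=
          mul_le_mul_of_nonneg_right hb1 h2sq
    _ ≤ β * (9*(N:ℚ)^2*(t:ℚ)^2) := mul_le_mul_of_nonneg_left hsq hβ0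
  have hfinal : (a:ℚ) * (2*(m:ℚ)+1)^4 + (b:ℚ) * (2*(m:ℚ)+1)^2 + (c:ℚ) < 384 * (t:ℚ)^4 := by
    have ht0 : (0:ℚ) ≤ (t:ℚ) := by positivity
    have e2 : (t:ℚ) ≤ (t:ℚ)^2 := by
      calc (t:ℚ) = (t:ℚ) * 1 := by ring
      _ ≤ (t:ℚ) * (t:ℚ) := mul_le_mul_of_nonneg_left htq1 ht0
      _ = (t:ℚ)^2 := by ring
    have e3 : (t:ℚ)^2 * (t:ℚ) ≤ (t:ℚ)^2 * (t:ℚ)^2 :=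
      mul_le_mul_of_nonneg_left e2 (sq_nonneg _)
    have e4 : (t:ℚ)^2 * (t:ℚ) = 9*(N:ℚ)^2*(β+γ+1) * (t:ℚ)^2 := by rw [htq]; ring
    have eN2 : (1:ℚ) ≤ (N:ℚ)^2 := by
      calc (1:ℚ) = 1*1 := by ring
      _ ≤ (N:ℚ)*(N:ℚ) := mul_le_mul hNq hNq (by norm_num) (by linarith)
      _ = (N:ℚ)^2 := by ring
    have et2 : (1:ℚ) ≤ (t:ℚ)^2 := by
      calc (1:ℚ) = 1*1 := by ring
      _ ≤ (t:ℚ)*(t:ℚ) := mul_le_mul htq1 htq1 (by norm_num) (by linarith)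
      _ = (t:ℚ)^2 := by ring
    have e5 : (1:ℚ) ≤ 9*(N:ℚ)^2*(t:ℚ)^2 := by
      calc (1:ℚ) = 9*1*1 - 8 := by ring
      _ ≤ 9*(N:ℚ)^2*(t:ℚ)^2 - 8 := by
          have := mul_le_mul eN2 et2 (by norm_num) (by linarith)
          linarith
      _ ≤ 9*(N:ℚ)^2*(t:ℚ)^2 := by linarith
    have e6 : γ * 1 ≤ γ * (9*(N:ℚ)^2*(t:ℚ)^2) := mul_le_mul_of_nonneg_left e5 hγ0
    have e7 : (t:ℚ)^4 = (t:ℚ)^2*(t:ℚ)^2 := by ring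
    have e8 : 0 ≤ β * (9*(N:ℚ)^2*(t:ℚ)^2) := mul_nonneg hβ0 (by linarith)
    have e9 : 0 ≤ γ * (9*(N:ℚ)^2*(t:ℚ)^2) := mul_nonneg hγ0 (by linarith)
    linarith [hA, hB, hc1, e3, e4, e6, e5, e7, e8, e9]
  linarith

theorem statement6 (P : Set (Fin 4 → ℝ)) (L : Polynomial ℚ) (δ1 δ2 : ℤ)
    (hP : IsLatticePolytope 4 P) (hdim : IsFullDim 4 P) (href : IsReflexive 4 P)
    (hL : IsEhrhart 4 P L) (hδ : HasDeltaVector 4 L ![1, δ1, δ2, δ1, 1]) :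
    (IsCL L ↔
      (δ1 = 76 ∧ δ2 = 230) ∨
      (5 * δ2 < 14 * δ1 + 86 ∧ 10 * δ1 ≤ 3 * δ2 + 70 ∧
        17 * (δ1 + 4 * δ2 - 15) ^ 2 ≤ (17 * δ1 + 49) ^ 2 + (17 * δ2 - 94) ^ 2)) ∧
    (IsCL L → δ1 ≤ 76 ∧ δ2 ≤ 230) := by
  -- the explicit evaluation of L
  have hev : ∀ m : ℕ, 384 * L.eval (m:ℚ) =
      ((2+2*δ1+δ2 : ℤ) : ℚ) * (2*(m:ℚ)+1)^4 + ((172+28*δ1-10*δ2 : ℤ) : ℚ) * (2*(m:ℚ)+1)^2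
        + ((210-30*δ1+9*δ2 : ℤ) : ℚ) := by
    intro m
    have h := hδ m
    rw [Fin.sum_univ_five] at h
    simp only [Matrix.cons_val_zero, Matrix.cons_val_one, Matrix.head_cons,
      Matrix.cons_val_two, Matrix.tail_cons, Matrix.cons_val_three, Matrix.cons_val_four,
      Matrix.cons_val_fin_one, Fin.val_zero, Fin.val_one, Fin.val_two] at h
    have e0 : 4 + m - 0 = m + 4 := by omega
    have e1 : 4 + m - 1 = m + 3 := by omega
    have e2 : 4 + m - 2 = m + 2 := by omega
    have v3 : ((3 : Fin 5) : ℕ) = 3 := rfl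
    have v4 : ((4 : Fin 5) : ℕ) = 4 := rfl
    have e3 : 4 + m - ((3 : Fin 5) : ℕ) = m + 1 := by rw [v3]; omega
    have e4 : 4 + m - ((4 : Fin 5) : ℕ) = m := by rw [v4]; omega
    rw [e0, e1, e2, e3, e4] at h
    have c0 := choose4_q (m+4)
    have c1 := choose4_q (m+3)
    have c2 := choose4_q (m+2)
    have c3 := choose4_q (m+1)
    have c4 := choose4_q m
    push_cast at c0 c1 c2 c3 c4 h ⊢
    linear_combination 384 * h + 16*c0 + (16*(δ1:ℚ))*c1 + (16*(δ2:ℚ))*c2 + (16*(δ1:ℚ))*c3 + 16*c4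
  -- value at 0
  have hL0 : L.eval 0 = 1 := by
    have h := hev 0
    norm_num at h
    linarith
  -- positivity of the leading data
  have haZ : (0:ℤ) < 2+2*δ1+δ2 := aZ_pos P hP href.1 L hL _ _ _ hev
  -- root characterization
  have hroot := root_iff L _ _ _ hev hL0
  -- real versions of the coefficients
  set ar : ℝ := ((2+2*δ1+δ2 : ℤ) : ℝ) with har_def
  set br : ℝ := ((172+28*δ1-10*δ2 : ℤ) : ℝ) with hbr_def
  set cr : ℝ := ((210-30*δ1+9*δ2 : ℤ) : ℝ) with hcr_def
  have har : 0 < ar := by rw [har_def]; exact_mod_cast haZ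
  -- main iff
  have main : IsCL L ↔
      (δ1 = 76 ∧ δ2 = 230) ∨
      (5 * δ2 < 14 * δ1 + 86 ∧ 10 * δ1 ≤ 3 * δ2 + 70 ∧
        17 * (δ1 + 4 * δ2 - 15) ^ 2 ≤ (17 * δ1 + 49) ^ 2 + (17 * δ2 - 94) ^ 2) := by
    constructor
    · -- forward
      intro hCL
      have Kreal : ∀ x y : ℝ, ar*(x^2-y^2)+br*x+cr = 0 → ar*(2*x*y)+br*y = 0 →
          (y = 0 ∧ x ≤ 0) := by
        intro x y h1 h2
        have hv := complex_quad_of_re_im ar br cr x y h1 h2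
        obtain ⟨s, hs⟩ := IsAlgClosed.exists_pow_nat_eq ((x:ℂ) + (y:ℂ)*Complex.I) (by norm_num : 0 < 2)
        have hzroot : ((s - 1)/2 : ℂ) ∈ cRoots L := by
          show ((s - 1)/2 : ℂ) ∈ (L.map (algebraMap ℚ ℂ)).roots
          rw [hroot]
          have e : (2*(((s-1)/2 : ℂ))+1)^2 = s^2 := by ring
          rw [e, hs]
          rw [har_def, hbr_def, hcr_def] at hv
          push_cast at hv ⊢
          exact_mod_cast hv
        have hre := hCL _ hzroot
        have hsre : s.re = 0 := by
          have hs2z : s = 2*(((s-1)/2 : ℂ))+1 := by ring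
          rw [hs2z]
          simp only [Complex.add_re, Complex.mul_re, Complex.re_ofNat, Complex.im_ofNat,
            Complex.one_re]
          rw [hre]; ring
        have him : y = 2*s.re*s.im := by
          have h := congrArg Complex.im hs
          simp only [pow_two, Complex.mul_im, Complex.add_im, Complex.ofReal_re,
            Complex.ofReal_im, Complex.mul_re, Complex.I_re, Complex.I_im, mul_zero, mul_one,
            zero_add, add_zero, zero_mul, sub_zero] at h
          linear_combination -h
        have hrev : x = s.re^2 - s.im^2 := by
          have h := congrArg Complex.re hs
          simp only [pow_two, Complex.mul_re, Complex.add_re, Complex.ofReal_re,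
            Complex.ofReal_im, Complex.I_re, Complex.I_im, mul_zero, mul_one, zero_add,
            add_zero, zero_mul, sub_zero] at h
          linear_combination -h
        constructor
        · rw [him, hsre]; ring
        · rw [hrev, hsre]; nlinarith [sq_nonneg s.im]
      obtain ⟨hb, hc, hd⟩ := quad_forward ar br cr har Kreal
      -- transfer to ℤ
      have hbZ : (0:ℤ) ≤ 172+28*δ1-10*δ2 := by exact_mod_cast hbr_def ▸ hb
      have hcZ : (0:ℤ) ≤ 210-30*δ1+9*δ2 := by exact_mod_cast hcr_def ▸ hc
      have hdZ : 4*(2+2*δ1+δ2)*(210-30*δ1+9*δ2) ≤ (172+28*δ1-10*δ2)^2 := by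
        rw [har_def, hbr_def, hcr_def] at hd
        exact_mod_cast hd
      by_cases hb0 : 172+28*δ1-10*δ2 = 0
      · left
        have hc0 : 210-30*δ1+9*δ2 ≤ 0 := by nlinarith
        omega
      · right
        have hb1 : (0:ℤ) < 172+28*δ1-10*δ2 := lt_of_le_of_ne hbZ (Ne.symm hb0)
        refine ⟨by omega, by omega, ?_⟩
        have hiden : 64*((17*δ1+49)^2 + (17*δ2-94)^2 - 17*(δ1+4*δ2-15)^2) =
            17*((172+28*δ1-10*δ2)^2 - 4*(2+2*δ1+δ2)*(210-30*δ1+9*δ2)) := by ring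
        nlinarith [hdZ, hiden]
    · -- reverse
      intro hcond
      have hbZ : (0:ℤ) ≤ 172+28*δ1-10*δ2 := by
        rcases hcond with ⟨h1, h2⟩ | ⟨h1, h2, h3⟩ <;> omega
      have hcZ : (0:ℤ) ≤ 210-30*δ1+9*δ2 := by
        rcases hcond with ⟨h1, h2⟩ | ⟨h1, h2, h3⟩ <;> omega
      have hdZ : 4*(2+2*δ1+δ2)*(210-30*δ1+9*δ2) ≤ (172+28*δ1-10*δ2)^2 := by
        rcases hcond with ⟨h1, h2⟩ | ⟨h1, h2, h3⟩
        · subst h1; subst h2; norm_num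
        · nlinarith [h3]
      have hb : 0 ≤ br := by rw [hbr_def]; exact_mod_cast hbZ
      have hc : 0 ≤ cr := by rw [hcr_def]; exact_mod_cast hcZ
      have hd : 4*ar*cr ≤ br^2 := by
        rw [har_def, hbr_def, hcr_def]
        exact_mod_cast hdZ
      intro z hz
      have hz' : (z : ℂ) ∈ (L.map (algebraMap ℚ ℂ)).roots := hz
      rw [hroot] at hz'
      have hv : (ar:ℂ)*((2*z+1)^2)^2 + (br:ℂ)*((2*z+1)^2) + (cr:ℂ) = 0 := by
        rw [har_def, hbr_def, hcr_def]
        push_cast at hz' ⊢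
        exact_mod_cast hz'
      obtain ⟨h1, h2⟩ := complex_quad_re_im ar br cr _ hv
      obtain ⟨him, hre⟩ := quad_reverse ar br cr har hb hc hd _ _ h1 h2
      exact re_neg_half z him hre
  refine ⟨main, ?_⟩
  intro hCL
  rcases main.mp hCL with ⟨h1, h2⟩ | ⟨h1, h2, h3⟩
  · omega
  · omega
end
end

section
/- Let P ⊂ ℝ⁴ be a 4-dimensional reflexive polytope with δ-vector (1, δ_1, δ_2, δ_1, 1). Then P is real if and only if either (i) δ_1 = 76 and δ_2 = 230, or (ii) 5δ_2 > 14δ_1 + 86, 10δ_1 ≤ 3δ_2 + 70, and 17(δ_1 + 4δ_2 − 15)² ≤ (17δ_1 + 49)² + (17δ_2 − 94)². -/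
open Pointwise MeasureTheory Polynomial

noncomputable section

private lemma cast_choose_three (n : ℕ) : ((n.choose 3 : ℕ) : ℚ) = n*(n-1)*(n-2)/6 := by
  induction n with
  | zero => simp
  | succ n ih => rw [Nat.choose_succ_succ]; push_cast [ih, Nat.cast_choose_two]; ring

private lemma cast_choose_four (n : ℕ) : ((n.choose 4 : ℕ) : ℚ) = n*(n-1)*(n-2)*(n-3)/24 := by
  induction n with
  | zero => simp
  | succ n ih => rw [Nat.choose_succ_succ]; push_cast [ih, cast_choose_three]; ring

private lemma quadAux (A B C s : ℂ) (hA : A ≠ 0) (hs : s^2 = B^2 - 4*A*C) :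
    A*((-B+s)/(2*A))^2 + B*((-B+s)/(2*A)) + C = 0 ∧
    A*((-B-s)/(2*A))^2 + B*((-B-s)/(2*A)) + C = 0 ∧
    A*(((-B+s)/(2*A)) - ((-B-s)/(2*A))) = s ∧
    A*(((-B+s)/(2*A)) + ((-B-s)/(2*A))) = -B ∧
    A*(((-B+s)/(2*A)) * ((-B-s)/(2*A))) = C := by
  refine ⟨?_, ?_, ?_, ?_, ?_⟩
  · field_simp
    linear_combination hs
  · field_simp
    linear_combination hs
  · field_simp
    ring
  · field_simp
    ring
  · field_simp
    linear_combination (-1) * hs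

set_option maxHeartbeats 2000000 in
theorem statement8 (P : Set (Fin 4 → ℝ)) (L : Polynomial ℚ) (δ1 δ2 : ℤ)
    (hP : IsLatticePolytope 4 P) (hdim : IsFullDim 4 P) (href : IsReflexive 4 P)
    (hL : IsEhrhart 4 P L) (hδ : HasDeltaVector 4 L ![1, δ1, δ2, δ1, 1]) :
    IsRealRooted L ↔
      (δ1 = 76 ∧ δ2 = 230) ∨
      (5 * δ2 > 14 * δ1 + 86 ∧ 10 * δ1 ≤ 3 * δ2 + 70 ∧
        17 * (δ1 + 4 * δ2 - 15) ^ 2 ≤ (17 * δ1 + 49) ^ 2 + (17 * δ2 - 94) ^ 2) := by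
  classical
  -- Step 1 : identify L explicitly
  have hQ : L = Polynomial.C (1/384 : ℚ) *
      (Polynomial.C ((2+2*δ1+δ2 : ℤ) : ℚ) * (2*Polynomial.X+1)^4
        + Polynomial.C ((172+28*δ1-10*δ2 : ℤ) : ℚ) * (2*Polynomial.X+1)^2
        + Polynomial.C ((210-30*δ1+9*δ2 : ℤ) : ℚ)) := by
    rw [← sub_eq_zero]
    apply Polynomial.eq_zero_of_infinite_isRoot
    apply Set.Infinite.mono (s := Set.range (Nat.cast : ℕ → ℚ))
    · rintro _ ⟨m, rfl⟩
      have h1 := hδ m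
      simp only [Fin.sum_univ_succ] at h1
      simp only [Matrix.cons_val_zero, Matrix.cons_val_succ, Fin.val_zero, Fin.val_succ,
        Int.cast_one, Finset.univ_unique, Finset.sum_singleton, Fin.val_eq_zero] at h1
      have e0 : 4 + m - 0 = m + 4 := by omega
      have e1 : 4 + m - (0 + 1) = m + 3 := by omega
      have e2 : 4 + m - (0 + 1 + 1) = m + 2 := by omega
      have e3 : 4 + m - (0 + 1 + 1 + 1) = m + 1 := by omega
      have e4 : 4 + m - (0 + 1 + 1 + 1 + 1) = m := by omega
      rw [e0, e1, e2, e3, e4] at h1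
      simp only [Set.mem_setOf_eq, Polynomial.IsRoot, Polynomial.eval_sub, Polynomial.eval_mul,
        Polynomial.eval_add, Polynomial.eval_pow, Polynomial.eval_C, Polynomial.eval_X,
        Polynomial.eval_one, Polynomial.eval_ofNat, h1]
      rw [cast_choose_four, cast_choose_four, cast_choose_four, cast_choose_four,
        cast_choose_four]
      push_cast
      ring
    · exact Set.infinite_range_of_injective Nat.cast_injective
  have h384 : ∀ m : ℕ, (384:ℚ) * L.eval (m:ℚ) =
      ((2+2*δ1+δ2 : ℤ) : ℚ)*(2*(m:ℚ)+1)^4 + ((172+28*δ1-10*δ2 : ℤ) : ℚ)*(2*(m:ℚ)+1)^2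
        + ((210-30*δ1+9*δ2 : ℤ) : ℚ) := by
    intro m
    rw [hQ]
    simp only [Polynomial.eval_mul, Polynomial.eval_add, Polynomial.eval_pow, Polynomial.eval_C,
      Polynomial.eval_X, Polynomial.eval_one, Polynomial.eval_ofNat]
    ring
  -- Step 2 : positivity of the leading coefficient
  obtain ⟨V, hV⟩ := hP
  have hPbd : Bornology.IsBounded P := by
    rw [hV]
    exact isBounded_convexHull.mpr ((V.finite_toSet.image _).isBounded)
  obtain ⟨R, hR⟩ := hPbd.subset_closedBall 0
  have hfin : ∀ m : ℕ, (latticePts 4 ((m:ℝ) • P)).Finite := by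
    intro m
    apply Set.Finite.subset
      (Fintype.piFinset (fun _ : Fin 4 => Finset.Icc (-(⌈(m:ℝ)*R⌉)) ⌈(m:ℝ)*R⌉)).finite_toSet
    intro x hx
    obtain ⟨y, hy, hxy⟩ := hx
    have hyR : ‖y‖ ≤ R := by simpa [Metric.mem_closedBall, dist_zero_right] using hR hy
    have hbig : ∀ i, |(x i : ℝ)| ≤ (m:ℝ)*R := by
      intro i
      have h1 : |(x i : ℝ)| ≤ ‖(fun i => (x i : ℝ))‖ := by
        simpa [Real.norm_eq_abs] using norm_le_pi_norm (fun i => (x i : ℝ)) i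
      have h2 : ‖(fun i => (x i : ℝ))‖ = (m:ℝ) * ‖y‖ := by
        rw [← hxy, norm_smul]
        simp [Real.norm_eq_abs, abs_of_nonneg (by positivity : (0:ℝ) ≤ (m:ℝ))]
      have h3 : (m:ℝ) * ‖y‖ ≤ (m:ℝ)*R :=
        mul_le_mul_of_nonneg_left hyR (Nat.cast_nonneg m)
      linarith
    simp only [Finset.mem_coe, Fintype.mem_piFinset, Finset.mem_Icc]
    intro i
    have h1 := abs_le.mp (hbig i)
    constructor
    · have h4 : (-(⌈(m:ℝ)*R⌉ : ℤ) : ℝ) ≤ (x i : ℝ) := by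
        have h5 := Int.le_ceil ((m:ℝ)*R)
        push_cast
        linarith [h1.1]
      exact_mod_cast h4
    · have h4 : (x i : ℝ) ≤ (⌈(m:ℝ)*R⌉ : ℝ) := le_trans h1.2 (Int.le_ceil _)
      exact_mod_cast h4
  obtain ⟨ε, hε, hball⟩ : ∃ ε > 0, Metric.ball (0 : Fin 4 → ℝ) ε ⊆ P := by
    obtain ⟨ε, hε, hb⟩ := Metric.isOpen_iff.mp isOpen_interior 0 href.1
    exact ⟨ε, hε, hb.trans interior_subset⟩
  have hgrow : ∀ m k : ℕ, (k:ℝ) < (m:ℝ)*ε → (((2*k+1)^4 : ℕ) : ℚ) ≤ L.eval (m:ℚ) := by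
    intro m k hk
    have hm : 0 < m := by
      rcases Nat.eq_zero_or_pos m with h | h
      · exfalso
        subst h
        simp only [Nat.cast_zero, zero_mul] at hk
        exact absurd hk (not_lt.mpr (by positivity))
      · exact h
    rw [hL m]
    have hsub : ↑(Fintype.piFinset fun _ : Fin 4 => Finset.Icc (-(k:ℤ)) (k:ℤ)) ⊆
        latticePts 4 ((m:ℝ) • P) := by
      intro x hx
      simp only [Finset.mem_coe, Fintype.mem_piFinset, Finset.mem_Icc] at hx
      have hxi : ∀ i, |(x i : ℝ)| ≤ (k:ℝ) := by
        intro i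
        rw [abs_le]
        constructor
        · exact_mod_cast (hx i).1
        · exact_mod_cast (hx i).2
      have hnorm : ‖(fun i => (x i:ℝ))‖ ≤ (k:ℝ) :=
        (pi_norm_le_iff_of_nonneg (Nat.cast_nonneg k)).mpr
          (fun i => by simpa [Real.norm_eq_abs] using hxi i)
      have hmem : (fun i => (x i:ℝ)) ∈ Metric.ball (0 : Fin 4 → ℝ) ((m:ℝ)*ε) := by
        rw [mem_ball_zero_iff]
        exact lt_of_le_of_lt hnorm hk
      have hbeq : (m:ℝ) • Metric.ball (0:Fin 4 → ℝ) ε = Metric.ball 0 ((m:ℝ)*ε) := by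
        rw [smul_ball (by exact_mod_cast hm.ne' : (m:ℝ) ≠ 0)]
        simp [Real.norm_eq_abs, abs_of_nonneg (by positivity : (0:ℝ) ≤ (m:ℝ))]
      exact Set.smul_set_mono hball (hbeq ▸ hmem)
    have hcard : (Fintype.piFinset fun _ : Fin 4 => Finset.Icc (-(k:ℤ)) (k:ℤ)).card
        = (2*k+1)^4 := by
      rw [Fintype.card_piFinset]
      have hI : (Finset.Icc (-(k:ℤ)) (k:ℤ)).card = 2*k+1 := by
        rw [Int.card_Icc]
        omega
      simp [hI]
    have hle := Set.ncard_le_ncard hsub (hfin m)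
    rw [Set.ncard_coe_finset, hcard] at hle
    exact_mod_cast hle
  have hA : 0 < 2+2*δ1+δ2 := by
    by_contra hA'
    push_neg at hA'
    set Kz : ℤ := 9*|172+28*δ1-10*δ2| + |210-30*δ1+9*δ2| with hKdef
    have hKnn : 0 ≤ Kz := by positivity
    have hub : ∀ m : ℕ, 1 ≤ m → L.eval (m:ℚ) ≤ (Kz:ℚ) * (m:ℚ)^2 := by
      intro m hm1
      have hm1' : (1:ℚ) ≤ (m:ℚ) := by exact_mod_cast hm1
      have h := h384 m
      have h1 : ((2+2*δ1+δ2 : ℤ):ℚ) * (2*(m:ℚ)+1)^4 ≤ 0 := by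
        apply mul_nonpos_of_nonpos_of_nonneg
        · exact_mod_cast hA'
        · positivity
      have h2 : ((172+28*δ1-10*δ2 : ℤ):ℚ) * (2*(m:ℚ)+1)^2
          ≤ ((|172+28*δ1-10*δ2| : ℤ):ℚ) * (9*(m:ℚ)^2) := by
        have hq : ((2*(m:ℚ)+1))^2 ≤ 9*(m:ℚ)^2 := by nlinarith
        have hb : ((172+28*δ1-10*δ2 : ℤ):ℚ) ≤ ((|172+28*δ1-10*δ2| : ℤ):ℚ) := by
          exact_mod_cast le_abs_self _
        have habs : (0:ℚ) ≤ ((|172+28*δ1-10*δ2| : ℤ):ℚ) := by positivity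
        nlinarith [sq_nonneg (2*(m:ℚ)+1)]
      have h3 : ((210-30*δ1+9*δ2 : ℤ):ℚ) ≤ ((|210-30*δ1+9*δ2| : ℤ):ℚ) * (m:ℚ)^2 := by
        have hb : ((210-30*δ1+9*δ2 : ℤ):ℚ) ≤ ((|210-30*δ1+9*δ2| : ℤ):ℚ) := by
          exact_mod_cast le_abs_self _
        have habs : (0:ℚ) ≤ ((|210-30*δ1+9*δ2| : ℤ):ℚ) := by positivity
        have hmsq : (1:ℚ) ≤ (m:ℚ)^2 := by nlinarith
        exact le_trans hb (le_mul_of_one_le_right habs hmsq)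
      have hKc : (Kz:ℚ) = 9*((|172+28*δ1-10*δ2| : ℤ):ℚ) + ((|210-30*δ1+9*δ2| : ℤ):ℚ) := by
        rw [hKdef]; push_cast; ring
      have hKnn' : (0:ℚ) ≤ (Kz:ℚ) := by exact_mod_cast hKnn
      nlinarith [h, h1, h2, h3]
    obtain ⟨m, hm⟩ := exists_nat_gt (max (2/ε) (16*(Kz:ℝ)/ε^4))
    have hm2 : 2/ε < (m:ℝ) := lt_of_le_of_lt (le_max_left _ _) hm
    have hm3 : 16*(Kz:ℝ)/ε^4 < (m:ℝ) := lt_of_le_of_lt (le_max_right _ _) hm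
    have hmpos : (0:ℝ) < (m:ℝ) := lt_trans (by positivity) hm2
    have hm1 : 1 ≤ m := by exact_mod_cast Nat.one_le_iff_ne_zero.mpr (by
      intro h0
      rw [h0] at hmpos
      simp at hmpos)
    have hm1' : (1:ℝ) ≤ (m:ℝ) := by exact_mod_cast hm1
    have hge2 : 2 ≤ (m:ℝ)*ε := by
      rw [div_lt_iff₀ hε] at hm2; linarith
    set k : ℕ := ⌊((m:ℝ)*ε)/2⌋₊ with hkdef
    have hk : (k:ℝ) < (m:ℝ)*ε := by
      have h1 : (k:ℝ) ≤ ((m:ℝ)*ε)/2 := Nat.floor_le (by positivity)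
      linarith
    have hlow := hgrow m k hk
    have hub' := hub m hm1
    have hc : (2*(k:ℝ)+1)^4 ≤ (Kz:ℝ) * (m:ℝ)^2 := by
      have := le_trans hlow hub'
      have h9 : ((((2*k+1)^4 : ℕ)):ℝ) ≤ (Kz:ℝ) * (m:ℝ)^2 := by exact_mod_cast this
      push_cast at h9
      convert h9 using 2
    have h2k : (m:ℝ)*ε/2 ≤ 2*(k:ℝ)+1 := by
      have h1 := Nat.lt_floor_add_one (((m:ℝ)*ε)/2)
      push_cast at h1
      linarith
    have h4 : ((m:ℝ)*ε/2)^4 ≤ (Kz:ℝ) * (m:ℝ)^2 :=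
      le_trans (pow_le_pow_left₀ (by positivity) h2k 4) hc
    have e1 : 16*(Kz:ℝ) < (m:ℝ) * ε^4 := by
      rw [div_lt_iff₀ (by positivity : (0:ℝ) < ε^4)] at hm3; linarith
    have e2 : 16*(Kz:ℝ)*(m:ℝ)^2 < (m:ℝ)^3 * ε^4 := by
      have := mul_lt_mul_of_pos_right e1 (pow_pos hmpos 2)
      nlinarith [this]
    have e3 : (m:ℝ)^4 * ε^4 ≤ 16*(Kz:ℝ)*(m:ℝ)^2 := by nlinarith [h4]
    have e5 : (m:ℝ)^3*ε^4 ≤ (m:ℝ)^4*ε^4 := by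
      have h9 : (m:ℝ)^3 ≤ (m:ℝ)^4 := pow_le_pow_right₀ hm1' (by norm_num)
      exact mul_le_mul_of_nonneg_right h9 (pow_pos hε 4).le
    linarith
  -- Step 3 : complex roots
  have hL0 : L ≠ 0 := by
    intro h0
    have h := h384 0
    rw [h0] at h
    push_cast at h
    norm_num at h
    linarith [h]
  have hmapne : L.map (algebraMap ℚ ℂ) ≠ 0 := Polynomial.map_ne_zero hL0
  have heval : ∀ z : ℂ, (L.map (algebraMap ℚ ℂ)).eval z =
      (1/384 : ℂ) * (((2+2*δ1+δ2 : ℤ) : ℂ)*(2*z+1)^4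
        + ((172+28*δ1-10*δ2 : ℤ) : ℂ)*(2*z+1)^2 + ((210-30*δ1+9*δ2 : ℤ) : ℂ)) := by
    intro z
    rw [hQ]
    simp only [Polynomial.eval_map, Polynomial.eval₂_mul, Polynomial.eval₂_add,
      Polynomial.eval₂_pow, Polynomial.eval₂_C, Polynomial.eval₂_X, Polynomial.eval₂_one,
      Polynomial.eval₂_ofNat]
    simp only [eq_ratCast]
    push_cast
    ring
  have hmem : ∀ z : ℂ, z ∈ cRoots L ↔ ((2+2*δ1+δ2 : ℤ) : ℂ)*(2*z+1)^4
      + ((172+28*δ1-10*δ2 : ℤ) : ℂ)*(2*z+1)^2 + ((210-30*δ1+9*δ2 : ℤ) : ℂ) = 0 := by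
    intro z
    rw [cRoots, Polynomial.mem_roots hmapne, Polynomial.IsRoot.def, heval z, mul_eq_zero]
    constructor
    · rintro (h | h)
      · norm_num at h
      · exact h
    · intro h; exact Or.inr h
  have hApos : (0:ℝ) < ((2+2*δ1+δ2 : ℤ):ℝ) := by exact_mod_cast hA
  have hAneC : ((2+2*δ1+δ2 : ℤ) : ℂ) ≠ 0 := by
    simp only [ne_eq, Int.cast_eq_zero]
    omega
  constructor
  · -- forward direction
    intro hreal
    have hquad : ∀ w : ℂ, ((2+2*δ1+δ2 : ℤ) : ℂ)*w^2 + ((172+28*δ1-10*δ2 : ℤ) : ℂ)*w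
        + ((210-30*δ1+9*δ2 : ℤ) : ℂ) = 0 → w.im = 0 ∧ 0 ≤ w.re := by
      intro w hw
      obtain ⟨u, hu⟩ := IsAlgClosed.exists_pow_nat_eq (k := ℂ) w (n := 2) (by norm_num)
      have hz : ((u - 1)/2) ∈ cRoots L := by
        rw [hmem]
        have h2z : 2*((u-1)/2)+1 = u := by ring
        rw [h2z, (by ring : u^4 = (u^2)^2), hu]
        exact hw
      have him := hreal _ hz
      have hui : u.im = 0 := by
        have hu2 : u = 2*((u-1)/2)+1 := by ring
        have h6 := congrArg Complex.im hu2
        simpa [Complex.add_im, Complex.mul_im, him] using h6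
      constructor
      · rw [← hu]; simp [pow_two, Complex.mul_im, hui]
      · rw [← hu]
        simp only [pow_two, Complex.mul_re, hui, mul_zero, sub_zero]
        exact mul_self_nonneg _
    obtain ⟨s, hs⟩ := IsAlgClosed.exists_pow_nat_eq (k := ℂ)
      (((172+28*δ1-10*δ2 : ℤ):ℂ)^2 - 4*((2+2*δ1+δ2 : ℤ):ℂ)*((210-30*δ1+9*δ2 : ℤ):ℂ))
      (n := 2) (by norm_num)
    obtain ⟨hw1, hw2, hdiff, hsumC, hprodC⟩ := quadAux _ _ _ s hAneC hs
    obtain ⟨hi1, hr1⟩ := hquad _ hw1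
    obtain ⟨hi2, hr2⟩ := hquad _ hw2
    set w1 : ℂ := (-((172+28*δ1-10*δ2 : ℤ):ℂ) + s)/(2*((2+2*δ1+δ2 : ℤ):ℂ)) with hw1def
    set w2 : ℂ := (-((172+28*δ1-10*δ2 : ℤ):ℂ) - s)/(2*((2+2*δ1+δ2 : ℤ):ℂ)) with hw2def
    have hsim : s.im = 0 := by
      have h6 := congrArg Complex.im hdiff
      rw [Complex.mul_im, Complex.sub_im, hi1, hi2] at h6
      simpa [Complex.intCast_im] using h6.symm
    have hsum : ((2+2*δ1+δ2 : ℤ):ℝ)*(w1.re + w2.re) = -((172+28*δ1-10*δ2 : ℤ):ℝ) := by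
      have h6 := congrArg Complex.re hsumC
      rw [Complex.mul_re, Complex.add_re, Complex.add_im, hi1, hi2] at h6
      simpa [Complex.intCast_re, Complex.intCast_im] using h6
    have hprod : ((2+2*δ1+δ2 : ℤ):ℝ)*(w1.re * w2.re) = ((210-30*δ1+9*δ2 : ℤ):ℝ) := by
      have h6 := congrArg Complex.re hprodC
      rw [Complex.mul_re, Complex.mul_re, Complex.mul_im, hi1, hi2] at h6
      simpa [Complex.intCast_re, Complex.intCast_im] using h6
    have hdisc : 0 ≤ (172+28*δ1-10*δ2)^2 - 4*(2+2*δ1+δ2)*(210-30*δ1+9*δ2) := by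
      have hR : ((172+28*δ1-10*δ2 : ℤ):ℂ)^2 - 4*((2+2*δ1+δ2 : ℤ):ℂ)*((210-30*δ1+9*δ2 : ℤ):ℂ)
          = ((((172+28*δ1-10*δ2)^2 - 4*(2+2*δ1+δ2)*(210-30*δ1+9*δ2) : ℤ)):ℂ) := by
        push_cast; ring
      rw [hR] at hs
      have h6 := congrArg Complex.re hs
      rw [pow_two, Complex.mul_re, hsim] at h6
      simp only [mul_zero, sub_zero, Complex.intCast_re] at h6
      have h0 : (0:ℝ) ≤ (((172+28*δ1-10*δ2)^2 - 4*(2+2*δ1+δ2)*(210-30*δ1+9*δ2) : ℤ):ℝ) := by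
        rw [← h6]; exact mul_self_nonneg _
      exact_mod_cast h0
    have hBle : (172+28*δ1-10*δ2 : ℤ) ≤ 0 := by
      have h0 : (0:ℝ) ≤ -((172+28*δ1-10*δ2 : ℤ):ℝ) := by
        rw [← hsum]
        exact mul_nonneg hApos.le (add_nonneg hr1 hr2)
      have h7 : ((172+28*δ1-10*δ2 : ℤ):ℝ) ≤ 0 := by linarith
      exact_mod_cast h7
    have hCge : (0:ℤ) ≤ 210-30*δ1+9*δ2 := by
      have h0 : (0:ℝ) ≤ ((210-30*δ1+9*δ2 : ℤ):ℝ) := by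
        rw [← hprod]
        exact mul_nonneg hApos.le (mul_nonneg hr1 hr2)
      exact_mod_cast h0
    rcases eq_or_lt_of_le hBle with hB0 | hBlt
    · -- B = 0 forces C = 0, giving the special pair
      left
      have hx12 : w1.re + w2.re = 0 := by
        have h0 : ((2+2*δ1+δ2 : ℤ):ℝ)*(w1.re + w2.re) = 0 := by
          rw [hsum]
          have h8 : ((172+28*δ1-10*δ2 : ℤ):ℝ) = 0 := by exact_mod_cast hB0
          rw [h8]; ring
        exact (mul_eq_zero.mp h0).resolve_left hApos.ne'
      have hx10 : w1.re = 0 := by linarith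
      have hC0 : (210-30*δ1+9*δ2 : ℤ) = 0 := by
        have h8 : ((210-30*δ1+9*δ2 : ℤ):ℝ) = 0 := by
          rw [← hprod, hx10]; ring
        exact_mod_cast h8
      constructor <;> omega
    · right
      refine ⟨by omega, by omega, ?_⟩
      linarith only [hdisc]
  · -- backward direction
    rintro (⟨hd1, hd2⟩ | ⟨h1, h2, h3⟩) <;> intro z hz <;> have heq := (hmem z).mp hz
    · -- the special pair
      subst hd1; subst hd2
      norm_num at heq
      have h0 : 2*z+1 = 0 := heq
      have h6 := congrArg Complex.im h0
      simp only [Complex.add_im, Complex.mul_im, Complex.one_im, Complex.zero_im,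
        Complex.re_ofNat, Complex.im_ofNat] at h6
      linarith [h6]
    · have hBlt : (172+28*δ1-10*δ2 : ℤ) < 0 := by omega
      have hCge : (0:ℤ) ≤ 210-30*δ1+9*δ2 := by omega
      have hdisc : (0:ℤ) ≤ (172+28*δ1-10*δ2)^2 - 4*(2+2*δ1+δ2)*(210-30*δ1+9*δ2) := by
        linarith only [h3]
      have hdR : (0:ℝ) ≤ ((172+28*δ1-10*δ2 : ℤ):ℝ)^2
          - 4*((2+2*δ1+δ2 : ℤ):ℝ)*((210-30*δ1+9*δ2 : ℤ):ℝ) := by exact_mod_cast hdisc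
      have hBR : ((172+28*δ1-10*δ2 : ℤ):ℝ) < 0 := by exact_mod_cast hBlt
      have hCR : (0:ℝ) ≤ ((210-30*δ1+9*δ2 : ℤ):ℝ) := by exact_mod_cast hCge
      set w : ℂ := (2*z+1)^2 with hwdef
      have hw : ((2+2*δ1+δ2 : ℤ):ℂ)*w^2 + ((172+28*δ1-10*δ2 : ℤ):ℂ)*w
          + ((210-30*δ1+9*δ2 : ℤ):ℂ) = 0 := by
        rw [hwdef, ← pow_mul]
        exact heq
      set x : ℝ := w.re with hxdef
      set y : ℝ := w.im with hydef
      have him : ((2+2*δ1+δ2 : ℤ):ℝ)*(x*y+y*x) + ((172+28*δ1-10*δ2 : ℤ):ℝ)*y = 0 := by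
        have h6 := congrArg Complex.im hw
        simpa [pow_two, Complex.add_im, Complex.mul_im, Complex.mul_re,
          Complex.intCast_im, Complex.intCast_re] using h6
      have hre : ((2+2*δ1+δ2 : ℤ):ℝ)*(x*x-y*y) + ((172+28*δ1-10*δ2 : ℤ):ℝ)*x
          + ((210-30*δ1+9*δ2 : ℤ):ℝ) = 0 := by
        have h6 := congrArg Complex.re hw
        simpa [pow_two, Complex.add_re, Complex.mul_re, Complex.mul_im,
          Complex.intCast_im, Complex.intCast_re] using h6
      have hy0 : y = 0 := by
        by_contra hy
        have hfac : y * (2*((2+2*δ1+δ2 : ℤ):ℝ)*x + ((172+28*δ1-10*δ2 : ℤ):ℝ)) = 0 := by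
          linear_combination him
        have h2' : 2*((2+2*δ1+δ2 : ℤ):ℝ)*x + ((172+28*δ1-10*δ2 : ℤ):ℝ) = 0 :=
          (mul_eq_zero.mp hfac).resolve_left hy
        have hy2 : 0 < y*y := mul_self_pos.mpr hy
        have hB2 : ((172+28*δ1-10*δ2 : ℤ):ℝ)^2 = 4*((2+2*δ1+δ2 : ℤ):ℝ)^2*x^2 := by
          linear_combination (((172+28*δ1-10*δ2 : ℤ):ℝ) - 2*((2+2*δ1+δ2 : ℤ):ℝ)*x) * h2'
        have hACc : ((2+2*δ1+δ2 : ℤ):ℝ)*((210-30*δ1+9*δ2 : ℤ):ℝ)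
            = ((2+2*δ1+δ2 : ℤ):ℝ)^2*(x^2+y*y) := by
          linear_combination ((2+2*δ1+δ2 : ℤ):ℝ) * hre - x*((2+2*δ1+δ2 : ℤ):ℝ) * h2'
        nlinarith [hdR, hB2, hACc, mul_pos (mul_pos hApos hApos) hy2]
      have hx0 : 0 ≤ x := by
        by_contra hx
        push_neg at hx
        have hre' : ((2+2*δ1+δ2 : ℤ):ℝ)*(x*x) + ((172+28*δ1-10*δ2 : ℤ):ℝ)*x
            + ((210-30*δ1+9*δ2 : ℤ):ℝ) = 0 := by
          rw [hy0] at hre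
          linarith [hre]
        nlinarith [mul_pos hApos (mul_pos_of_neg_of_neg hx hx),
          mul_pos_of_neg_of_neg hBR hx]
      have huim : (2*z+1).im = 0 := by
        have hwim : ((2*z+1)*(2*z+1)).im = 0 := by
          rw [← pow_two]; exact hy0
        have hwre : 0 ≤ ((2*z+1)*(2*z+1)).re := by
          rw [← pow_two]; exact hx0
        rw [Complex.mul_im] at hwim
        rw [Complex.mul_re] at hwre
        rcases mul_eq_zero.mp (by linarith [hwim] : (2*z+1).re * (2*z+1).im = 0) with h | h
        · nlinarith [mul_self_nonneg ((2*z+1).im), mul_self_nonneg ((2*z+1).re)]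
        · exact h
      simp only [Complex.add_im, Complex.mul_im, Complex.one_im, Complex.re_ofNat,
        Complex.im_ofNat] at huim
      linarith [huim]
end
end
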